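/- arXiv:2001.04856 — 8 statements merged into one kernel-verified Lean document; each statement's English description precedes it below -/
import Mathlib

section
/- In a lattice of finite height, the following are equivalent: (1) L is modular; (2) for all x, y in L, x∨y covers both x and y if and only if x and y both cover x∧y; (3) L is ranked and its height function satisfies h(x) + h(y) = h(x∧y) + h(x∨y) for all x, y. -/
/-!
(1) ⇒ (2) is the covering property of modular lattices. For (2) ⇒ (3), induction along the finite
length upgrades Birkhoff's two weak covering conditions to upper and lower semimodularity. Lower
semimodularity makes any two lower covers of an element have the same height (they both cover
their meet), so the height is a rank function. Semimodularity gives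
`h (x ⊔ y) + h (x ⊓ y) ≤ h x + h y` by climbing a maximal chain from `x ⊓ y` to `x`, and the dual
argument gives the reverse inequality. For (3) ⇒ (1), when `x ≤ z` the elements
`x ⊔ y ⊓ z ≤ (x ⊔ y) ⊓ z` have the same meet and join with `y`, hence the same height, hence are
equal.
-/

open Order OrderDual

section CoveringConditions

variable {α : Type*} [Lattice α]

theorem covBy_sup_and_covBy_sup_iff [IsWeakUpperModularLattice α] [IsWeakLowerModularLattice α]
    (x y : α) : (x ⋖ x ⊔ y ∧ y ⋖ x ⊔ y) ↔ (x ⊓ y ⋖ x ∧ x ⊓ y ⋖ y) :=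
  ⟨fun ⟨hx, hy⟩ => ⟨inf_covBy_of_covBy_sup_of_covBy_sup_left hx hy,
      inf_covBy_of_covBy_sup_of_covBy_sup_right hx hy⟩,
    fun ⟨hx, hy⟩ => ⟨covBy_sup_of_inf_covBy_of_inf_covBy_left hx hy,
      covBy_sup_of_inf_covBy_of_inf_covBy_right hx hy⟩⟩

theorem CovBy.sup_wcovBy_sup [IsUpperModularLattice α] {a b : α} (hab : a ⋖ b) (c : α) :
    a ⊔ c ⩿ b ⊔ c := by
  have hb : b ⊔ (a ⊔ c) = b ⊔ c := by rw [← sup_assoc, sup_eq_left.2 hab.le]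
  rcases hab.eq_or_eq (le_inf hab.le le_sup_left) inf_le_left with h | h
  · rw [← hb]
    exact (covBy_sup_of_inf_covBy_left (by rwa [h])).wcovBy
  · rw [← hb, sup_eq_right.2 (inf_eq_left.1 h)]
    exact WCovBy.refl _

end CoveringConditions

section FiniteLength

variable {α : Type*} [Lattice α] [WellFoundedLT α] [WellFoundedGT α]

theorem isUpperModularLattice_of_isWeakUpperModularLattice [IsWeakUpperModularLattice α] :
    IsUpperModularLattice α := by
  refine ⟨fun {a b} hab => ?_⟩
  induction hd : a ⊓ b using WellFoundedGT.induction generalizing a with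
  | _ d ih =>
  rcases (hd ▸ inf_le_right : d ≤ b).eq_or_lt with hdb | hdb
  · rwa [sup_eq_left.2 (inf_eq_right.1 (hd.trans hdb)), ← hdb, ← hd]
  obtain ⟨c, hdc, hcb⟩ := exists_covBy_le_of_lt hdb
  have hac : a ⊓ c = a ⊓ b :=
    le_antisymm (inf_le_inf_left a hcb) (le_inf inf_le_left (hd ▸ hdc.le))
  have hcac : c ⋖ a ⊔ c := covBy_sup_of_inf_covBy_of_inf_covBy_right (hac ▸ hab) (hac ▸ hd ▸ hdc)
  have hmeet : (a ⊔ c) ⊓ b = c := by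
    rcases hcac.eq_or_eq (le_inf le_sup_right hcb) inf_le_left with h | h
    · exact h
    · exact absurd (inf_eq_left.2 (le_sup_left.trans (inf_eq_left.1 h))) hab.ne
  have := ih c hdc.lt (a := a ⊔ c) (by rwa [hmeet]) hmeet
  rwa [sup_assoc, sup_eq_right.2 hcb] at this

theorem isLowerModularLattice_of_isWeakLowerModularLattice [IsWeakLowerModularLattice α] :
    IsLowerModularLattice α :=
  have : IsUpperModularLattice αᵒᵈ := isUpperModularLattice_of_isWeakUpperModularLattice
  ⟨fun h => (covBy_sup_of_inf_covBy_left (α := αᵒᵈ) h.toDual).ofDual⟩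

theorem sup_add_inf_le_add_of_covBy [IsUpperModularLattice α] (r : α → ℤ)
    (hr : ∀ a b : α, a ⋖ b → r b = r a + 1) (x y : α) : r (x ⊔ y) + r (x ⊓ y) ≤ r x + r y := by
  induction x using WellFoundedLT.induction with
  | _ x ih =>
  rcases (inf_le_left : x ⊓ y ≤ x).eq_or_lt with hxy | hxy
  · rw [sup_eq_right.2 (inf_eq_left.1 hxy), hxy, add_comm]
  obtain ⟨c, hc, hcx⟩ := exists_le_covBy_of_lt hxy
  have hcy : c ⊓ y = x ⊓ y := le_antisymm (inf_le_inf_right y hcx.le) (le_inf hc inf_le_right)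
  have hsup : r (x ⊔ y) ≤ r (c ⊔ y) + 1 := by
    rcases wcovBy_iff_covBy_or_eq.1 (hcx.sup_wcovBy_sup y) with h | h
    · rw [hr _ _ h]
    · rw [h]; omega
  have := ih c hcx.lt
  rw [hcy] at this
  have := hr _ _ hcx
  omega

theorem add_le_inf_add_sup_of_covBy [IsLowerModularLattice α] (r : α → ℤ)
    (hr : ∀ a b : α, a ⋖ b → r b = r a + 1) (x y : α) : r x + r y ≤ r (x ⊓ y) + r (x ⊔ y) := by
  have := sup_add_inf_le_add_of_covBy (α := αᵒᵈ) (fun x => -r (ofDual x))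
    (fun a b h => by rw [hr _ _ h.ofDual]; ring) (toDual x) (toDual y)
  simp only [ofDual_sup, ofDual_inf, ofDual_toDual] at this
  omega

theorem CovBy.height_eq_add_one [IsWeakLowerModularLattice α] {a b : α} (hab : a ⋖ b)
    (hb : height b ≠ ⊤) : height b = height a + 1 := by
  induction b using WellFoundedLT.induction generalizing a with
  | _ b ih =>
  obtain ⟨m, hm⟩ := ENat.ne_top_iff_exists.1 hb
  cases m with
  | zero => exact absurd (height_eq_zero.1 hm.symm) (not_isMin_of_lt hab.lt)
  | succ n =>
  obtain ⟨-, ⟨y, hyb, hy⟩, hle⟩ :=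
    (height_eq_coe_add_one_iff (n := n)).1 (by rw [← hm, Nat.cast_succ])
  obtain ⟨c, hyc, hcb⟩ := exists_le_covBy_of_lt hyb
  have hc : height c = n := le_antisymm (hle c hcb.lt) (hy ▸ height_mono hyc)
  suffices height a = height c by rw [this, hc, ← hm, Nat.cast_succ]
  rcases eq_or_ne a c with rfl | hac
  · rfl
  have hsup : a ⊔ c = b := (hab.eq_or_eq le_sup_left (sup_le hab.le hcb.le)).resolve_left
    fun h => hac ((hcb.eq_or_eq (sup_eq_left.1 h) hab.le).resolve_right hab.ne)
  have hfin : ∀ x ≤ b, height x ≠ ⊤ := fun x hx => ne_top_of_le_ne_top hb (height_mono hx)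
  have ha_sup : a ⋖ a ⊔ c := hsup ▸ hab
  have hc_sup : c ⋖ a ⊔ c := hsup ▸ hcb
  rw [ih a hab.lt (inf_covBy_of_covBy_sup_of_covBy_sup_left ha_sup hc_sup) (hfin a hab.le),
    ih c hcb.lt (inf_covBy_of_covBy_sup_of_covBy_sup_right ha_sup hc_sup) (hfin c hcb.le)]

end FiniteLength

theorem ENat.add_eq_add_iff_toNat_int {a b c d : ℕ∞} (ha : a ≠ ⊤) (hb : b ≠ ⊤) (hc : c ≠ ⊤)
    (hd : d ≠ ⊤) : a + b = c + d ↔ (a.toNat : ℤ) + b.toNat = c.toNat + d.toNat := by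
  lift a to ℕ using ha
  lift b to ℕ using hb
  lift c to ℕ using hc
  lift d to ℕ using hd
  simp only [ENat.toNat_natCast]
  norm_cast

section FiniteHeight

variable {α : Type*} [Preorder α]

theorem strictMono_toNat_height (h : ∀ x : α, height x ≠ ⊤) :
    StrictMono fun x : α => (height x).toNat :=
  fun x y hxy => by
    have := height_strictMono hxy (h x).lt_top
    rwa [← ENat.natCast_toNat (h x), ← ENat.natCast_toNat (h y), Nat.cast_lt] at this

theorem wellFoundedGT_of_height_top_ne_top [OrderTop α] (h : height (⊤ : α) ≠ ⊤) :
    WellFoundedGT α := by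
  have hfin : ∀ x : α, height x ≠ ⊤ := fun x => ne_top_of_le_ne_top h (height_mono le_top)
  refine StrictAnti.wellFoundedGT (f := fun x : α => (height (⊤ : α)).toNat - (height x).toNat)
    fun x y hxy => ?_
  have hlt : (height x).toNat < (height y).toNat := strictMono_toNat_height hfin hxy
  have hle := ENat.toNat_le_toNat (height_mono (le_top : y ≤ ⊤)) h
  dsimp only
  omega

end FiniteHeight

section Valuation

variable {α : Type*} [Lattice α]

theorem isModularLattice_of_strictMono_of_add_eq {M : Type*} [Add M] [IsRightCancelAdd M]
    [Preorder M] (r : α → M) (hr : StrictMono r)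
    (h : ∀ x y, r x + r y = r (x ⊓ y) + r (x ⊔ y)) : IsModularLattice α := by
  refine ⟨fun {x} y {z} hxz => ?_⟩
  have hab : x ⊔ y ⊓ z ≤ (x ⊔ y) ⊓ z :=
    sup_le (le_inf le_sup_left hxz) (inf_le_inf_right z le_sup_right)
  have hinf : (x ⊔ y ⊓ z) ⊓ y = (x ⊔ y) ⊓ z ⊓ y := le_antisymm (inf_le_inf_right y hab)
    (le_inf (le_sup_of_le_right (le_inf inf_le_right (inf_le_left.trans inf_le_right)))
      inf_le_right)
  have hsup : (x ⊔ y ⊓ z) ⊔ y = (x ⊔ y) ⊓ z ⊔ y := le_antisymm (sup_le_sup_right hab y)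
    (sup_le (inf_le_left.trans (sup_le (le_sup_of_le_left le_sup_left) le_sup_right))
      le_sup_right)
  have hr_eq : r (x ⊔ y ⊓ z) = r ((x ⊔ y) ⊓ z) :=
    add_right_cancel (b := r y) (by rw [h, hinf, hsup, ← h])
  exact (hab.eq_of_not_lt fun hlt => (hr hlt).ne hr_eq).ge

end Valuation

/-- For a lattice of finite height the following are equivalent:
(1) the lattice is modular;
(2) `x ∨ y` covers both `x` and `y` iff both `x` and `y` cover `x ∧ y`;
(3) the lattice is ranked and `h x + h y = h (x ⊓ y) + h (x ⊔ y)`. -/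
theorem modular_tfae {α : Type*} [Lattice α] [BoundedOrder α]
    (hfin : Order.height (⊤ : α) ≠ ⊤) :
    [ IsModularLattice α,
      ∀ x y : α, (x ⋖ x ⊔ y ∧ y ⋖ x ⊔ y) ↔ (x ⊓ y ⋖ x ∧ x ⊓ y ⋖ y),
      (∀ x y : α, x ⋖ y → Order.height y = Order.height x + 1) ∧
        (∀ x y : α, Order.height x + Order.height y =
          Order.height (x ⊓ y) + Order.height (x ⊔ y)) ].TFAE := by
  have hfin' : ∀ x : α, height x ≠ ⊤ := fun x => ne_top_of_le_ne_top hfin (height_mono le_top)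
  have : WellFoundedLT α := (strictMono_toNat_height hfin').wellFoundedLT
  have : WellFoundedGT α := wellFoundedGT_of_height_top_ne_top hfin
  let r : α → ℤ := fun x => (height x).toNat
  have hval : ∀ x y : α, height x + height y = height (x ⊓ y) + height (x ⊔ y) ↔
      r x + r y = r (x ⊓ y) + r (x ⊔ y) := fun x y =>
    ENat.add_eq_add_iff_toNat_int (hfin' x) (hfin' y) (hfin' _) (hfin' _)
  tfae_have 1 → 2 := fun _ => covBy_sup_and_covBy_sup_iff
  tfae_have 2 → 3 := by
    intro h
    have : IsWeakUpperModularLattice α := ⟨fun hx hy => ((h _ _).2 ⟨hx, hy⟩).1⟩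
    have : IsWeakLowerModularLattice α := ⟨fun hx hy => ((h _ _).1 ⟨hx, hy⟩).1⟩
    have : IsUpperModularLattice α := isUpperModularLattice_of_isWeakUpperModularLattice
    have : IsLowerModularLattice α := isLowerModularLattice_of_isWeakLowerModularLattice
    have hrank : ∀ a b : α, a ⋖ b → height b = height a + 1 :=
      fun a b hab => hab.height_eq_add_one (hfin' b)
    have hr : ∀ a b : α, a ⋖ b → r b = r a + 1 := fun a b hab => by
      simp only [r, hrank a b hab, ENat.toNat_add (hfin' a) ENat.one_ne_top]
      push_cast
      rfl
    exact ⟨hrank, fun x y => (hval x y).2 <| le_antisymm (add_le_inf_add_sup_of_covBy r hr x y)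
      (by linarith [sup_add_inf_le_add_of_covBy r hr x y])⟩
  tfae_have 3 → 1 := fun ⟨_, h⟩ => isModularLattice_of_strictMono_of_add_eq r
    (Nat.strictMono_cast.comp (strictMono_toNat_height hfin')) fun x y => (hval x y).1 (h x y)
  tfae_finish
end

section
/- Let L be a modular lattice of finite height. For any up-down path of length d(x,y) from x to y in the cover graph (i.e., a shortest path in which all upward cover steps precede all downward cover steps), the top vertex of the path (the last vertex of the final up step) equals x ∨ y. Dually, for any down-up shortest path, the bottom vertex equals x ∧ y. -/
open Order

/-- The cover graph of a lattice. -/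
def coverGraph (α : Type*) [Lattice α] : SimpleGraph α where
  Adj u v := u ⋖ v ∨ v ⋖ u
  symm := ⟨fun _ _ h => h.elim Or.inr Or.inl⟩
  loopless := ⟨fun _ h => h.elim (fun h' => h'.ne rfl) (fun h' => h'.ne rfl)⟩

section Aux

set_option linter.unusedSectionVars false

variable {α : Type*} [Lattice α] [IsModularLattice α]

/-- natural-number height -/
private noncomputable def hN (a : α) : ℕ := (Order.height a).toNat

private lemma height_eq_hN (hfin : ∀ a : α, Order.height a ≠ ⊤) (a : α) :
    Order.height a = (hN a : ℕ∞) := (ENat.coe_toNat (hfin a)).symm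

private lemma hN_lt (hfin : ∀ a : α, Order.height a ≠ ⊤) {a b : α} (hab : a < b) :
    hN a < hN b := by
  have h := Order.height_strictMono hab (lt_of_le_of_ne le_top (hfin a))
  rw [height_eq_hN hfin a, height_eq_hN hfin b] at h
  exact_mod_cast h

private lemma hN_le (hfin : ∀ a : α, Order.height a ≠ ⊤) {a b : α} (hab : a ≤ b) :
    hN a ≤ hN b :=
  ENat.toNat_le_toNat (Order.height_mono hab) (hfin b)

private lemma hN_cov_le (hfin : ∀ a : α, Order.height a ≠ ⊤) :
    ∀ (n : ℕ) (u v : α), hN v ≤ n → u ⋖ v → hN v ≤ hN u + 1 := by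
  intro n
  induction n with
  | zero =>
    intro u v hn huv
    exact absurd (Nat.lt_of_lt_of_le (hN_lt hfin huv.lt) hn) (by omega)
  | succ n ih =>
    intro u v hn huv
    -- suffices: ∀ w < v, hN w ≤ hN u
    have key : ∀ w < v, hN w ≤ hN u := by
      intro w hwv
      by_cases hwu : w ≤ u
      · exact hN_le hfin hwu
      · have hsup : u ⊔ w = v := by
          rcases huv.eq_or_eq (c := u ⊔ w) le_sup_left (sup_le huv.lt.le hwv.le) with h | h
          · exact absurd (le_sup_right.trans h.le) hwu
          · exact h
        have hcov : u ⊓ w ⋖ w := inf_covBy_of_covBy_sup_left (by rw [hsup]; exact huv)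
        have hlt : u ⊓ w < u := by
          rcases lt_or_eq_of_le (inf_le_left : u ⊓ w ≤ u) with h | h
          · exact h
          · exfalso
            have huw : u ≤ w := h ▸ inf_le_right
            rcases lt_or_eq_of_le huw with h' | h'
            · exact huv.2 h' hwv
            · exact hwu (h' ▸ le_refl u)
        have h1 : hN w ≤ hN (u ⊓ w) + 1 := by
          apply ih (u ⊓ w) w _ hcov
          have := hN_lt hfin hwv
          omega
        have h2 : hN (u ⊓ w) < hN u := hN_lt hfin hlt
        omega
    -- conclude
    have : Order.height v ≤ ((hN u + 1 : ℕ) : ℕ∞) := by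
      rw [Order.height_le_coe_iff]
      intro w hwv
      calc Order.height w = (hN w : ℕ∞) := height_eq_hN hfin w
        _ < ((hN u + 1 : ℕ) : ℕ∞) := by exact_mod_cast Nat.lt_succ_of_le (key w hwv)
    rw [height_eq_hN hfin v] at this
    exact_mod_cast this

private lemma hN_cov (hfin : ∀ a : α, Order.height a ≠ ⊤) {u v : α} (huv : u ⋖ v) :
    hN v = hN u + 1 :=
  le_antisymm (hN_cov_le hfin (hN v) u v le_rfl huv) (hN_lt hfin huv.lt)

private lemma exists_walk (hfin : ∀ a : α, Order.height a ≠ ⊤) :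
    ∀ (n : ℕ) (a b : α), a ≤ b → hN b ≤ hN a + n →
      ∃ w : (coverGraph α).Walk a b, w.length ≤ n := by
  intro n
  induction n with
  | zero =>
    intro a b hab hn
    rcases eq_or_lt_of_le hab with rfl | h
    · exact ⟨SimpleGraph.Walk.nil, by simp⟩
    · exact absurd (hN_lt hfin h) (by omega)
  | succ n ih =>
    intro a b hab hn
    rcases eq_or_lt_of_le hab with rfl | h
    · exact ⟨SimpleGraph.Walk.nil, by simp⟩
    · -- pick t of minimal height with a < t ≤ b
      set T : Set ℕ := hN '' {t : α | a < t ∧ t ≤ b} with hT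
      have hTne : T.Nonempty := ⟨hN b, b, ⟨h, le_rfl⟩, rfl⟩
      obtain ⟨t, ⟨hat, htb⟩, hmt⟩ := Nat.sInf_mem hTne
      have hcov : a ⋖ t := by
        refine ⟨hat, fun c hac hct => ?_⟩
        have hc : hN c ∈ T := ⟨c, ⟨hac, hct.le.trans htb⟩, rfl⟩
        have := Nat.sInf_le hc
        have := hN_lt hfin hct
        omega
      obtain ⟨w, hw⟩ := ih t b htb (by have h1 := hN_lt hfin hat; have := hN_cov hfin hcov; omega)
      exact ⟨SimpleGraph.Walk.cons (show (coverGraph α).Adj a t from Or.inl hcov) w, by simpa using hw⟩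

private lemma chain_up (hfin : ∀ a : α, Order.height a ≠ ⊤) :
    ∀ (l : List α) (a c : α), List.Chain (· ⋖ ·) a l → (a :: l).getLast? = some c →
      a ≤ c ∧ hN c = hN a + l.length := by
  intro l
  induction l with
  | nil =>
    intro a c _ hc
    simp only [List.getLast?_singleton, Option.some.injEq] at hc
    subst hc; simp
  | cons b l ih =>
    intro a c hchain hc
    replace hchain := List.isChain_cons_cons.mp hchain
    have hc' : (b :: l).getLast? = some c := by
      rwa [List.getLast?_cons_cons] at hc
    obtain ⟨h1, h2⟩ := ih b c hchain.2 hc'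
    refine ⟨(hchain.1.lt.le).trans h1, ?_⟩
    rw [h2, hN_cov hfin hchain.1]
    simp; omega

private lemma chain_down (hfin : ∀ a : α, Order.height a ≠ ⊤) :
    ∀ (l : List α) (a c : α), List.Chain (fun x y => y ⋖ x) a l → (a :: l).getLast? = some c →
      c ≤ a ∧ hN a = hN c + l.length := by
  intro l
  induction l with
  | nil =>
    intro a c _ hc
    simp only [List.getLast?_singleton, Option.some.injEq] at hc
    subst hc; simp
  | cons b l ih =>
    intro a c hchain hc
    replace hchain := List.isChain_cons_cons.mp hchain
    have hc' : (b :: l).getLast? = some c := by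
      rwa [List.getLast?_cons_cons] at hc
    obtain ⟨h1, h2⟩ := ih b c hchain.2 hc'
    refine ⟨h1.trans hchain.1.lt.le, ?_⟩
    rw [hN_cov hfin hchain.1, h2]
    simp; omega

private theorem aux_sup (hfin : ∀ a : α, Order.height a ≠ ⊤) (x y : α)
    (z : α) (l₁ l₂ : List α)
    (h1 : (l₁ ++ [z]).Chain' (· ⋖ ·))
    (h2 : (z :: l₂).Chain' (fun a b => b ⋖ a))
    (hh : (l₁ ++ z :: l₂).head? = some x)
    (hl : (l₁ ++ z :: l₂).getLast? = some y)
    (hlen : (l₁ ++ z :: l₂).length = (coverGraph α).dist x y + 1) :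
    z = x ⊔ y := by
  -- facts from the up chain
  have hup : x ≤ z ∧ hN z = hN x + l₁.length := by
    cases l₁ with
    | nil =>
      simp only [List.nil_append, List.head?_cons, Option.some.injEq] at hh
      subst hh; simp
    | cons a l =>
      simp only [List.cons_append, List.head?_cons, Option.some.injEq] at hh
      subst hh
      have hchain : List.Chain (· ⋖ ·) a (l ++ [z]) := h1
      have hlast : (a :: (l ++ [z])).getLast? = some z := by
        rw [show a :: (l ++ [z]) = (a :: l) ++ [z] by simp]
        exact List.getLast?_concat
      obtain ⟨ha, hb⟩ := chain_up hfin (l ++ [z]) a z hchain hlast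
      exact ⟨ha, by simpa using hb⟩
  -- facts from the down chain
  have hdown : y ≤ z ∧ hN z = hN y + l₂.length := by
    have hlast : (z :: l₂).getLast? = some y := by
      rwa [List.getLast?_append_of_ne_nil _ (by simp : (z :: l₂) ≠ [])] at hl
    have hchain : List.Chain (fun a b => b ⋖ a) z l₂ := h2
    exact chain_down hfin l₂ z y hchain hlast
  obtain ⟨hxz, hx⟩ := hup
  obtain ⟨hyz, hy⟩ := hdown
  have hdist : (coverGraph α).dist x y = l₁.length + l₂.length := by
    simp only [List.length_append, List.length_cons] at hlen
    omega
  set s := x ⊔ y with hs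
  have hsz : s ≤ z := sup_le hxz hyz
  have hsn : hN s ≤ hN z := hN_le hfin hsz
  have hxs : hN x ≤ hN s := hN_le hfin (le_sup_left)
  have hys : hN y ≤ hN s := hN_le hfin (le_sup_right)
  -- walks x → s and y → s
  obtain ⟨w₁, hw₁⟩ := exists_walk hfin (hN s - hN x) x s le_sup_left (by omega)
  obtain ⟨w₂, hw₂⟩ := exists_walk hfin (hN s - hN y) y s le_sup_right (by omega)
  have hdle : (coverGraph α).dist x y ≤ (hN s - hN x) + (hN s - hN y) := by
    have := SimpleGraph.dist_le (w₁.append w₂.reverse)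
    simp only [SimpleGraph.Walk.length_append, SimpleGraph.Walk.length_reverse] at this
    omega
  have : hN z ≤ hN s := by omega
  have heq : hN s = hN z := le_antisymm hsn this
  rcases eq_or_lt_of_le hsz with h | h
  · exact h.symm
  · exact absurd (hN_lt hfin h) (by omega)

end Aux

section Dual

variable {α : Type*} [Lattice α]

private def dualIso : coverGraph α ≃g coverGraph αᵒᵈ where
  toEquiv := OrderDual.toDual
  map_rel_iff' := by
    intro a b
    simp only [coverGraph, Equiv.coe_fn_mk]
    constructor
    · rintro (h | h)
      · exact Or.inr h.ofDual
      · exact Or.inl h.ofDual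
    · rintro (h | h)
      · exact Or.inr h.toDual
      · exact Or.inl h.toDual

private lemma dist_dual (u v : α) :
    (coverGraph αᵒᵈ).dist (OrderDual.toDual u) (OrderDual.toDual v) = (coverGraph α).dist u v := by
  set e : coverGraph α ≃g coverGraph αᵒᵈ := dualIso
  by_cases h : (coverGraph α).Reachable u v
  · apply le_antisymm
    · obtain ⟨p, hp⟩ := h.exists_walk_length_eq_dist
      calc (coverGraph αᵒᵈ).dist (OrderDual.toDual u) (OrderDual.toDual v)
          ≤ (p.map e.toHom).length := SimpleGraph.dist_le _
        _ = p.length := SimpleGraph.Walk.length_map _ _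
        _ = _ := hp
    · have h' : (coverGraph αᵒᵈ).Reachable (OrderDual.toDual u) (OrderDual.toDual v) :=
        h.map e.toHom
      obtain ⟨p, hp⟩ := h'.exists_walk_length_eq_dist
      have := SimpleGraph.dist_le ((p.map e.symm.toHom).copy rfl rfl)
      exact (by simpa [hp] using this : (coverGraph α).dist (e.symm (OrderDual.toDual u)) (e.symm (OrderDual.toDual v)) ≤ _)
  · have h' : ¬ (coverGraph αᵒᵈ).Reachable (OrderDual.toDual u) (OrderDual.toDual v) := by
      intro hr
      apply h
      have := hr.map e.symm.toHom
      exact this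
    rw [SimpleGraph.dist_eq_zero_of_not_reachable h,
      SimpleGraph.dist_eq_zero_of_not_reachable h']

end Dual

/-- In a modular lattice of finite height: for any up-down shortest path from `x` to
`y` in the cover graph (all up cover steps, peaking at `z`, then all down cover
steps), the peak `z` equals `x ⊔ y`; dually, for any down-up shortest path the
valley equals `x ⊓ y`. -/
theorem peak_of_updown_shortest_path {α : Type*} [Lattice α] [BoundedOrder α]
    [IsModularLattice α] (hfin : Order.height (⊤ : α) ≠ ⊤) (x y : α) :
    (∀ (z : α) (l₁ l₂ : List α),
      (l₁ ++ [z]).Chain' (· ⋖ ·) →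
      (z :: l₂).Chain' (fun a b => b ⋖ a) →
      (l₁ ++ z :: l₂).head? = some x →
      (l₁ ++ z :: l₂).getLast? = some y →
      (l₁ ++ z :: l₂).length = (coverGraph α).dist x y + 1 →
      z = x ⊔ y) ∧
    (∀ (z : α) (l₁ l₂ : List α),
      (l₁ ++ [z]).Chain' (fun a b => b ⋖ a) →
      (z :: l₂).Chain' (· ⋖ ·) →
      (l₁ ++ z :: l₂).head? = some x →
      (l₁ ++ z :: l₂).getLast? = some y →
      (l₁ ++ z :: l₂).length = (coverGraph α).dist x y + 1 →
      z = x ⊓ y) := by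
  have hfin' : ∀ a : α, Order.height a ≠ ⊤ := fun a h =>
    hfin (top_le_iff.mp (h ▸ Order.height_mono (le_top (a := a))))
  have hfin'' : ∀ a : αᵒᵈ, Order.height a ≠ ⊤ := by
    intro a h
    have hle : Order.height a ≤ Order.height (⊤ : α) := by
      show Order.coheight (OrderDual.ofDual a) ≤ _
      exact Order.coheight_le fun p _ => Order.length_le_height le_top
    exact hfin' ⊤ (top_le_iff.mp (h ▸ hle))
  constructor
  · intro z l₁ l₂ hc1 hc2 hh hl hlen
    exact aux_sup hfin' x y z l₁ l₂ hc1 hc2 hh hl hlen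
  · intro z l₁ l₂ hc1 hc2 hh hl hlen
    have key := aux_sup (α := αᵒᵈ) hfin'' (OrderDual.toDual x) (OrderDual.toDual y)
      (OrderDual.toDual z) (l₁.map OrderDual.toDual) (l₂.map OrderDual.toDual)
      (by
        rw [show l₁.map OrderDual.toDual ++ [OrderDual.toDual z]
            = (l₁ ++ [z]).map OrderDual.toDual by simp]
        exact (List.isChain_map _).mpr (hc1.imp fun _ _ h => h.toDual))
      (by
        rw [show OrderDual.toDual z :: l₂.map OrderDual.toDual
            = (z :: l₂).map OrderDual.toDual by simp]
        exact (List.isChain_map _).mpr (hc2.imp fun _ _ h => h.toDual))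
      (by
        rw [show l₁.map OrderDual.toDual ++ OrderDual.toDual z :: l₂.map OrderDual.toDual
            = (l₁ ++ z :: l₂).map OrderDual.toDual by simp]
        rw [List.head?_map, hh]; rfl)
      (by
        rw [show l₁.map OrderDual.toDual ++ OrderDual.toDual z :: l₂.map OrderDual.toDual
            = (l₁ ++ z :: l₂).map OrderDual.toDual by simp]
        rw [List.getLast?_map, hl]; rfl)
      (by
        rw [show l₁.map OrderDual.toDual ++ OrderDual.toDual z :: l₂.map OrderDual.toDual
            = (l₁ ++ z :: l₂).map OrderDual.toDual by simp]
        rw [List.length_map, dist_dual, hlen])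
    rw [← toDual_inf] at key
    exact OrderDual.toDual.injective key
end

section
/- Let L be a finite modular lattice and S a diamond-closed subset of the cover arcs of L. If S contains a path of length d(x,y) joining x and y (a shortest path in the cover graph), then S contains an up-down path of length d(x,y) from x to y, and also a down-up path of length d(x,y) from x to y. -/
def IsDiamond {α : Type*} [PartialOrder α] (a b c d : α) : Prop :=
  b ≠ c ∧ b ⋖ a ∧ c ⋖ a ∧ d ⋖ b ∧ d ⋖ c

def DiamondClosed {α : Type*} [PartialOrder α] (S : Set (α × α)) : Prop :=
  ∀ a b c d : α, IsDiamond a b c d →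
    (((a, b) ∈ S ∧ (a, c) ∈ S) ∨ ((b, d) ∈ S ∧ (c, d) ∈ S)) →
    ((a, b) ∈ S ∧ (a, c) ∈ S ∧ (b, d) ∈ S ∧ (c, d) ∈ S)


lemma chain_walk {V : Type*} (G : SimpleGraph V) :
    ∀ (l : List V) (x y : V), l.Chain' G.Adj → l.head? = some x → l.getLast? = some y →
      ∃ w : G.Walk x y, w.length + 1 = l.length
  | [], x, y => by simp
  | [a], x, y => by
      intro _ hx hy
      simp only [List.head?_cons, Option.some.injEq] at hx
      simp only [List.getLast?_singleton, Option.some.injEq] at hy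
      subst hx; subst hy
      exact ⟨SimpleGraph.Walk.nil, rfl⟩
  | a :: b :: t, x, y => by
      intro hc hx hy
      simp only [List.Chain', List.isChain_cons_cons] at hc
      simp only [List.head?_cons, Option.some.injEq] at hx
      subst hx
      rw [List.getLast?_cons_cons] at hy
      obtain ⟨w, hw⟩ := chain_walk G (b :: t) b y hc.2 rfl hy
      exact ⟨SimpleGraph.Walk.cons hc.1 w, by simp [SimpleGraph.Walk.length_cons, ← hw]⟩

lemma split_or_valley {α : Type*} (U D : α → α → Prop) :
    ∀ l : List α, l ≠ [] → l.Chain' (fun a b => U a b ∨ D a b) →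
      (∃ (z : α) (l₁ l₂ : List α), l = l₁ ++ z :: l₂ ∧ (l₁ ++ [z]).Chain' U ∧ (z :: l₂).Chain' D) ∨
      (∃ (p : List α) (u v w : α) (q : List α), l = p ++ u :: v :: w :: q ∧ D u v ∧ U v w)
  | [], h, _ => absurd rfl h
  | [a], _, _ => Or.inl ⟨a, [], [], rfl, List.isChain_singleton a, List.isChain_singleton a⟩
  | a :: b :: t, _, hc => by
      simp only [List.Chain', List.isChain_cons_cons] at hc
      rcases split_or_valley U D (b :: t) (by simp) hc.2 with
        ⟨z, l₁, l₂, heq, hU, hD⟩ | ⟨p, u, v, w, q, heq, hD, hU⟩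
      · cases l₁ with
        | nil =>
          rw [List.nil_append] at heq
          injection heq.symm with h1 h2
          subst h1; subst h2
          rcases hc.1 with hab | hab
          · exact Or.inl ⟨z, [a], l₂, rfl, List.isChain_pair.mpr hab, hD⟩
          · exact Or.inl ⟨a, [], z :: l₂, rfl, List.isChain_singleton a,
              List.isChain_cons_cons.mpr ⟨hab, hD⟩⟩
        | cons c l₁' =>
          rw [List.cons_append] at heq
          injection heq.symm with h1 h2
          subst h1; subst h2
          rcases hc.1 with hab | hab
          · exact Or.inl ⟨z, a :: c :: l₁', l₂, by simp, List.isChain_cons_cons.mpr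
              ⟨hab, by simpa only [List.cons_append, List.Chain', List.append_eq] using hU⟩, hD⟩
          · cases l₁' with
            | nil =>
              have hbz : U c z := by simpa [List.Chain'] using hU
              exact Or.inr ⟨[], a, c, z, l₂, by simp, hab, hbz⟩
            | cons e l₁'' =>
              have hbe : U c e := by
                have := hU
                simp only [List.cons_append] at this
                exact (List.isChain_cons_cons.mp this).1
              exact Or.inr ⟨[], a, c, e, l₁'' ++ z :: l₂, by simp, hab, hbe⟩
      · exact Or.inr ⟨a :: p, u, v, w, q, by simp [heq], hD, hU⟩

lemma key_lemma {α : Type*} (U D C : α → α → Prop)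
    (hUC : ∀ a b, U a b → C a b) (hDC : ∀ a b, D a b → C a b)
    (h : α → ℕ) (N : ℕ) (hh : ∀ a, h a < N)
    (hex : ∀ u v w, D u v → U v w → u ≠ w → ∃ m, U u m ∧ D m w ∧ h v < h m) :
    ∀ (n : ℕ) (l : List α), N * l.length ≤ (l.map h).sum + n → l ≠ [] →
      l.Chain' (fun a b => U a b ∨ D a b) →
      (∀ l' : List α, l'.Chain' C → l'.head? = l.head? → l'.getLast? = l.getLast? →
        l.length ≤ l'.length) →
      ∃ (z : α) (l₁ l₂ : List α), (l₁ ++ [z]).Chain' U ∧ (z :: l₂).Chain' D ∧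
        (l₁ ++ z :: l₂).head? = l.head? ∧ (l₁ ++ z :: l₂).getLast? = l.getLast? ∧
        (l₁ ++ z :: l₂).length = l.length := by
  intro n
  induction n with
  | zero =>
    intro l hb hne hc hmin
    rcases split_or_valley U D l hne hc with ⟨z, l₁, l₂, heq, hU, hD⟩ |
      ⟨p, u, v, w, q, heq, hD, hU⟩
    · exact ⟨z, l₁, l₂, hU, hD, by rw [heq], by rw [heq], by rw [heq]⟩
    · exfalso
      have hN : 1 ≤ N := Nat.pos_of_ne_zero (fun e => by simpa [e] using hh u)
      have hsum : (l.map h).sum ≤ (l.map h).length • (N - 1) :=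
        List.sum_le_card_nsmul _ _ (by
          intro x hx
          obtain ⟨a, _, rfl⟩ := List.mem_map.mp hx
          have := hh a; omega)
      simp only [List.length_map, smul_eq_mul] at hsum
      have hlen3 : 3 ≤ l.length := by subst heq; simp; omega
      have e2 : l.length * (N - 1) + l.length = l.length * N := by
        have hN' : N - 1 + 1 = N := by omega
        rw [← hN', Nat.mul_succ, hN']
      have h1 : l.length * N ≤ l.length * (N - 1) := by
        rw [Nat.mul_comm]
        exact le_trans hb (by simpa using hsum)
      rw [← e2] at h1
      have := Nat.lt_add_of_pos_right (n := l.length * (N - 1)) (by omega : 0 < l.length)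
      exact absurd h1 (by omega)
  | succ n ih =>
    intro l hb hne hc hmin
    rcases split_or_valley U D l hne hc with ⟨z, l₁, l₂, heq, hU, hD⟩ |
      ⟨p, u, v, w, q, heq, hD, hU⟩
    · exact ⟨z, l₁, l₂, hU, hD, by rw [heq], by rw [heq], by rw [heq]⟩
    · subst heq
      obtain ⟨hp, hmid, hlink⟩ := List.isChain_append.mp hc
      have hwq : (w :: q).Chain' (fun a b => U a b ∨ D a b) :=
        (List.isChain_cons_cons.mp (List.isChain_cons_cons.mp hmid).2).2
      have toC : ∀ {l' : List α}, l'.Chain' (fun a b => U a b ∨ D a b) → l'.Chain' C :=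
        fun hl' => hl'.imp (fun _ _ hab => hab.elim (hUC _ _) (hDC _ _))
      -- u ≠ w, else we could shortcut, contradicting minimality
      have hneq : u ≠ w := by
        rintro rfl
        have hshort : (p ++ u :: q).Chain' C := by
          refine List.isChain_append.mpr ⟨toC hp, toC hwq, ?_⟩
          intro x hx y hy
          simp only [List.head?_cons, Option.mem_def, Option.some.injEq] at hy
          subst hy
          exact (hlink x hx u (by simp)).elim (hUC _ _) (hDC _ _)
        have hH : (p ++ u :: q).head? = (p ++ u :: v :: u :: q).head? := by
          cases p <;> simp
        have hL : (p ++ u :: q).getLast? = (p ++ u :: v :: u :: q).getLast? := by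
          rw [List.getLast?_append_cons, List.getLast?_append_cons,
            List.getLast?_cons_cons, List.getLast?_cons_cons]
        have := hmin (p ++ u :: q) hshort hH hL
        simp only [List.length_append, List.length_cons] at this
        omega
      obtain ⟨m, hUm, hDm, hvm⟩ := hex u v w hD hU hneq
      set l' : List α := p ++ u :: m :: w :: q with hl'def
      have hc' : l'.Chain' (fun a b => U a b ∨ D a b) := by
        refine List.isChain_append.mpr ⟨hp, ?_, ?_⟩
        · exact List.isChain_cons_cons.mpr ⟨Or.inl hUm, List.isChain_cons_cons.mpr ⟨Or.inr hDm, hwq⟩⟩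
        · intro x hx y hy
          simp only [List.head?_cons, Option.mem_def, Option.some.injEq] at hy
          subst hy
          exact hlink x hx u (by simp)
      have hH : l'.head? = (p ++ u :: v :: w :: q).head? := by
        rw [hl'def]; cases p <;> simp
      have hL : l'.getLast? = (p ++ u :: v :: w :: q).getLast? := by
        rw [hl'def, List.getLast?_append_cons, List.getLast?_append_cons,
          List.getLast?_cons_cons, List.getLast?_cons_cons,
          List.getLast?_cons_cons, List.getLast?_cons_cons]
      have hlenEq : l'.length = (p ++ u :: v :: w :: q).length := by
        rw [hl'def]; simp
      have hsum : ((p ++ u :: v :: w :: q).map h).sum + 1 ≤ (l'.map h).sum := by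
        rw [hl'def]
        simp only [List.map_append, List.sum_append, List.map_cons, List.sum_cons]
        omega
      have hb' : N * l'.length ≤ (l'.map h).sum + n := by
        rw [hlenEq]
        exact le_trans hb (by omega)
      have hmin' : ∀ l'' : List α, l''.Chain' C → l''.head? = l'.head? →
          l''.getLast? = l'.getLast? → l'.length ≤ l''.length := by
        intro l'' hcc h1 h2
        rw [hlenEq]
        exact hmin l'' hcc (h1.trans hH) (h2.trans hL)
      obtain ⟨z, l₁, l₂, hU', hD', e1, e2, e3⟩ :=
        ih l' hb' (by rw [hl'def]; simp) hc' hmin'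
      exact ⟨z, l₁, l₂, hU', hD', e1.trans hH, e2.trans hL, e3.trans hlenEq⟩

lemma diamond_up {α : Type*} [Lattice α] [IsModularLattice α] {u v w : α}
    (hvu : v ⋖ u) (hvw : v ⋖ w) (hne : u ≠ w) : u ⋖ u ⊔ w ∧ w ⋖ u ⊔ w := by
  have hinf : u ⊓ w = v := by
    rcases hvu.eq_or_eq (le_inf hvu.le hvw.le) inf_le_left with h | h
    · exact h
    · exfalso
      have huw : u ≤ w := h ▸ inf_le_right
      rcases hvw.eq_or_eq hvu.le huw with h' | h'
      · exact hvu.lt.ne' h'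
      · exact hne h'
  exact ⟨covBy_sup_of_inf_covBy_right (hinf ▸ hvw), covBy_sup_of_inf_covBy_left (hinf ▸ hvu)⟩

lemma diamond_down {α : Type*} [Lattice α] [IsModularLattice α] {u v w : α}
    (huv : u ⋖ v) (hwv : w ⋖ v) (hne : u ≠ w) : u ⊓ w ⋖ u ∧ u ⊓ w ⋖ w := by
  have hsup : u ⊔ w = v := by
    rcases huv.eq_or_eq le_sup_left (sup_le huv.le hwv.le) with h | h
    · exfalso
      have hwu : w ≤ u := h ▸ le_sup_right
      rcases hwv.eq_or_eq hwu huv.le with h' | h'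
      · exact hne h'
      · exact huv.lt.ne h'
    · exact h
  exact ⟨inf_covBy_of_covBy_sup_right (hsup ▸ hwv), inf_covBy_of_covBy_sup_left (hsup ▸ huv)⟩

/-- Let `S` be a diamond-closed set of cover arcs (arcs `(u,v)` with `v ⋖ u`) of a
finite modular lattice.  If `S` contains a shortest path (of length `d(x,y)`)
joining `x` to `y`, then `S` contains an up-down shortest path from `x` to `y`,
and also a down-up shortest path from `x` to `y`. -/
theorem diamondClosed_has_updown_and_downup_paths
    {α : Type*} [Lattice α] [Fintype α] [IsModularLattice α]
    (S : Set (α × α)) (hSc : ∀ p ∈ S, p.2 ⋖ p.1) (hS : DiamondClosed S)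
    (x y : α) (l : List α)
    (hl : l.Chain' (fun u v => (u, v) ∈ S ∨ (v, u) ∈ S))
    (hx : l.head? = some x) (hy : l.getLast? = some y)
    (hlen : l.length = (coverGraph α).dist x y + 1) :
    (∃ (z : α) (l₁ l₂ : List α),
      (l₁ ++ [z]).Chain' (fun u v => (v, u) ∈ S) ∧
      (z :: l₂).Chain' (fun u v => (u, v) ∈ S) ∧
      (l₁ ++ z :: l₂).head? = some x ∧
      (l₁ ++ z :: l₂).getLast? = some y ∧
      (l₁ ++ z :: l₂).length = (coverGraph α).dist x y + 1) ∧
    (∃ (z : α) (l₁ l₂ : List α),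
      (l₁ ++ [z]).Chain' (fun u v => (u, v) ∈ S) ∧
      (z :: l₂).Chain' (fun u v => (v, u) ∈ S) ∧
      (l₁ ++ z :: l₂).head? = some x ∧
      (l₁ ++ z :: l₂).getLast? = some y ∧
      (l₁ ++ z :: l₂).length = (coverGraph α).dist x y + 1) := by
  classical
  have hne : l ≠ [] := by rintro rfl; simp at hx
  have hminC : ∀ l' : List α, l'.Chain' (coverGraph α).Adj → l'.head? = l.head? →
      l'.getLast? = l.getLast? → l.length ≤ l'.length := by
    intro l' hc' h1 h2
    obtain ⟨w, hw⟩ := chain_walk (coverGraph α) l' x y hc' (h1.trans hx) (h2.trans hy)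
    have := SimpleGraph.dist_le w
    omega
  set h : α → ℕ := fun a => (Finset.univ.filter (· < a)).card with hdef
  have hmono : ∀ a b : α, a < b → h a < h b := by
    intro a b hab
    apply Finset.card_lt_card
    refine (Finset.ssubset_iff_of_subset ?_).mpr ⟨a, by simp [hdef, hab], by simp [hdef]⟩
    intro c hc
    simp only [hdef, Finset.mem_filter, Finset.mem_univ, true_and] at hc ⊢
    exact hc.trans hab
  have hh : ∀ a : α, h a < Fintype.card α := by
    intro a
    rw [← Finset.card_univ]
    apply Finset.card_lt_card
    refine (Finset.ssubset_iff_of_subset (Finset.subset_univ _)).mpr ⟨a, Finset.mem_univ a, ?_⟩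
    simp [hdef]
  constructor
  · obtain ⟨z, l₁, l₂, hU, hD, e1, e2, e3⟩ := key_lemma
      (fun a b => (b, a) ∈ S) (fun a b => (a, b) ∈ S) (coverGraph α).Adj
      (fun a b hba => Or.inl (hSc _ hba))
      (fun a b hab => Or.inr (hSc _ hab))
      h (Fintype.card α) hh
      (by
        intro u v w hD hU hne'
        have hvu : v ⋖ u := hSc _ hD
        have hvw : v ⋖ w := hSc _ hU
        obtain ⟨hcu, hcw⟩ := diamond_up hvu hvw hne'
        obtain ⟨hsu, hsw, -, -⟩ :=
          hS (u ⊔ w) u w v ⟨hne', hcu, hcw, hvu, hvw⟩ (Or.inr ⟨hD, hU⟩)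
        exact ⟨u ⊔ w, hsu, hsw, hmono v (u ⊔ w) (hvu.lt.trans_le le_sup_left)⟩)
      (Fintype.card α * l.length) l (Nat.le_add_left _ _) hne
      (hl.imp (fun _ _ => Or.symm)) hminC
    exact ⟨z, l₁, l₂, hU, hD, e1.trans hx, e2.trans hy, e3.trans hlen⟩
  · obtain ⟨z, l₁, l₂, hU, hD, e1, e2, e3⟩ := key_lemma
      (fun a b => (a, b) ∈ S) (fun a b => (b, a) ∈ S) (coverGraph α).Adj
      (fun a b hab => Or.inr (hSc _ hab))
      (fun a b hba => Or.inl (hSc _ hba))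
      (fun a => Fintype.card α - 1 - h a) (Fintype.card α)
      (by
        intro a
        have : 0 < Fintype.card α := Fintype.card_pos_iff.mpr ⟨a⟩
        show Fintype.card α - 1 - h a < Fintype.card α
        omega)
      (by
        intro u v w hD hU hne'
        have huv : u ⋖ v := hSc _ hD
        have hwv : w ⋖ v := hSc _ hU
        obtain ⟨hmu, hmw⟩ := diamond_down huv hwv hne'
        obtain ⟨-, -, hsu, hsw⟩ :=
          hS v u w (u ⊓ w) ⟨hne', huv, hwv, hmu, hmw⟩ (Or.inl ⟨hD, hU⟩)
        refine ⟨u ⊓ w, hsu, hsw, ?_⟩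
        have h1 : h (u ⊓ w) < h v := hmono _ _ (hmu.lt.trans huv.lt)
        have h2 : h v < Fintype.card α := hh v
        show Fintype.card α - 1 - h v < Fintype.card α - 1 - h (u ⊓ w)
        omega)
      (Fintype.card α * l.length) l (Nat.le_add_left _ _) hne hl hminC
    exact ⟨z, l₁, l₂, hU, hD, e1.trans hx, e2.trans hy, e3.trans hlen⟩
end

section
/- Let L be a finite modular lattice and S a connected diamond-closed subset of the cover arcs of L. Then for any x, y belonging to arcs of S, S contains a path joining x to y of length exactly d(x,y), the cover-graph distance. -/
/-- A path joining `x` to `y` using the arcs of `S` in either direction. -/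
def IsPathIn {α : Type*} (S : Set (α × α)) (x y : α) (l : List α) : Prop :=
  l.head? = some x ∧ l.getLast? = some y ∧
    l.Chain' (fun u v => (u, v) ∈ S ∨ (v, u) ∈ S)

/-- `x` is a vertex spanned by the arc set `S`. -/
def ArcVertex {α : Type*} (S : Set (α × α)) (x : α) : Prop :=
  ∃ p ∈ S, p.1 = x ∨ p.2 = x

/-- `S` is connected: any two spanned vertices are joined by a path within `S`. -/
def ArcConnected {α : Type*} (S : Set (α × α)) : Prop :=
  ∀ x y, ArcVertex S x → ArcVertex S y → ∃ l, IsPathIn S x y l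

/-!
Orient every arc of `S` downwards. An up-step followed by a descent can be pushed down through
lower diamonds, so any path in `S` from `x` to `y` turns into a "V": descents in `S` from `x` and
from `y` to a common element `m`. Upper diamonds then let the bottom `m` of the V rise until it
is `x ⊓ y`. In a modular lattice a descent along cover arcs has length equal to the rank
difference, and along any edge of the cover graph `rank z - 2 * rank (z ⊓ y)` changes by at most
one; hence every walk from `x` to `y` has length at least `rank x + rank y - 2 * rank (x ⊓ y)`,
which is the length of the V through `x ⊓ y`.
-/

open Order SimpleGraph

section ModularDiamonds
variable {α : Type*} [Lattice α] [IsModularLattice α] {a b c d : α}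

theorem isDiamond_inf (hb : b ⋖ a) (hc : c ⋖ a) (hbc : b ≠ c) : IsDiamond a b c (b ⊓ c) := by
  have hsup : b ⊔ c = a := hb.wcovBy.sup_eq hc.wcovBy hbc
  refine ⟨hbc, hb, hc, inf_covBy_of_covBy_sup_right ?_, inf_covBy_of_covBy_sup_left ?_⟩
  · rwa [hsup]
  · rwa [hsup]

theorem isDiamond_sup (hb : d ⋖ b) (hc : d ⋖ c) (hbc : b ≠ c) : IsDiamond (b ⊔ c) b c d := by
  have hinf : b ⊓ c = d := hb.wcovBy.inf_eq hc.wcovBy hbc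
  refine ⟨hbc, covBy_sup_of_inf_covBy_right ?_, covBy_sup_of_inf_covBy_left ?_, hb, hc⟩
  · rwa [hinf]
  · rwa [hinf]

theorem CovBy.inf_eq_or_covBy (h : a ⋖ b) (c : α) : a ⊓ c = b ⊓ c ∨ a ⊓ c ⋖ b ⊓ c := by
  by_cases hba : b ⊓ c ≤ a
  · exact Or.inl (le_antisymm (inf_le_inf_right c h.le) (le_inf hba inf_le_right))
  · have hsup : a ⊔ b ⊓ c = b :=
      (h.eq_or_eq le_sup_left (sup_le h.le inf_le_left)).resolve_left
        fun h' => hba (le_sup_right.trans h'.le)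
    have hcov : a ⊓ (b ⊓ c) ⋖ b ⊓ c := inf_covBy_of_covBy_sup_left (by rwa [hsup])
    rw [← inf_assoc, inf_eq_left.mpr h.le] at hcov
    exact Or.inr hcov

end ModularDiamonds

section Rank
variable {α : Type*} [Preorder α] [Finite α]

theorem Order.height_ne_top (a : α) : height a ≠ ⊤ := by
  have := Fintype.ofFinite α
  exact ne_top_of_le_ne_top (ENat.natCast_ne_top (Fintype.card α))
    (height_le fun p _ => mod_cast p.length_lt_card.le)

/-- `height a` is finite here, so `toNat` loses nothing. -/
noncomputable def rank (a : α) : ℕ := (height a).toNat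

theorem rank_mono : Monotone (rank : α → ℕ) := fun _ b h =>
  ENat.toNat_le_toNat (height_mono h) (height_ne_top b)

end Rank

section ModularRank
variable {α : Type*} [Lattice α] [IsModularLattice α] [Finite α]

theorem CovBy.height_eq {a b : α} (h : a ⋖ b) :
    height b = height a + 1 := by
  induction b using WellFoundedLT.induction generalizing a with
  | _ b ih =>
  obtain ⟨n, hn⟩ : ∃ n : ℕ, height b = n + 1 := by
    obtain ⟨_ | n, hk⟩ := WithTop.ne_top_iff_exists.mp (height_ne_top b)
    · exact absurd (by exact_mod_cast hk.symm) (height_ne_zero.mpr (not_isMin_of_lt h.lt))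
    · exact ⟨n, by rw [← hk]; push_cast; rfl⟩
  obtain ⟨-, ⟨c, hcb, hc⟩, hle⟩ := height_eq_coe_add_one_iff.mp hn
  obtain ⟨c', hcc', hc'b⟩ := exists_le_covBy_of_lt hcb
  have hc' : height c' = n := le_antisymm (hle c' hc'b.lt) (hc ▸ height_mono hcc')
  rcases eq_or_ne a c' with rfl | hne
  · rw [hn, hc']
  · have hd := isDiamond_inf h hc'b hne
    rw [hn, ← hc', ih a h.lt hd.2.2.2.1, ih c' hc'b.lt hd.2.2.2.2]

theorem CovBy.rank_eq {a b : α} (h : a ⋖ b) : rank b = rank a + 1 := by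
  rw [rank, rank, h.height_eq, ENat.toNat_add (height_ne_top a) ENat.one_ne_top]
  rfl

theorem CovBy.rank_inf_le {a b : α} (h : a ⋖ b) (c : α) :
    rank (b ⊓ c) ≤ rank (a ⊓ c) + 1 := by
  rcases h.inf_eq_or_covBy c with heq | hcov
  · rw [heq]; omega
  · rw [hcov.rank_eq]

end ModularRank

section Arcs
variable {α : Type*} {S : Set (α × α)} {a b c d m u v w x y z : α}

abbrev Descends (S : Set (α × α)) : α → α → Prop := Relation.ReflTransGen fun a b => (a, b) ∈ S

theorem Descends.le [Preorder α] (hSc : ∀ p ∈ S, p.2 ⋖ p.1) (h : Descends S x z) : z ≤ x := by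
  induction h with
  | refl => exact le_rfl
  | tail _ hyz ih => exact (hSc _ hyz).le.trans ih

variable [Lattice α] [IsModularLattice α]

theorem DiamondClosed.inf_mem (hS : DiamondClosed S) (hSc : ∀ p ∈ S, p.2 ⋖ p.1)
    (hab : (a, b) ∈ S) (hac : (a, c) ∈ S) (hbc : b ≠ c) : (b, b ⊓ c) ∈ S ∧ (c, b ⊓ c) ∈ S :=
  (hS a b c _ (isDiamond_inf (hSc _ hab) (hSc _ hac) hbc) (Or.inl ⟨hab, hac⟩)).2.2

theorem DiamondClosed.sup_mem (hS : DiamondClosed S) (hSc : ∀ p ∈ S, p.2 ⋖ p.1)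
    (hbd : (b, d) ∈ S) (hcd : (c, d) ∈ S) (hbc : b ≠ c) : (b ⊔ c, b) ∈ S ∧ (b ⊔ c, c) ∈ S :=
  (hS _ b c d (isDiamond_sup (hSc _ hbd) (hSc _ hcd) hbc) (Or.inr ⟨hbd, hcd⟩)).imp_right And.left

theorem Descends.inf_of_mem (hS : DiamondClosed S) (hSc : ∀ p ∈ S, p.2 ⋖ p.1)
    (h : Descends S y m) (hyx : (y, x) ∈ S) : Descends S x (x ⊓ m) ∧ Descends S m (x ⊓ m) := by
  induction h using Relation.ReflTransGen.head_induction_on generalizing x with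
  | refl =>
    rw [inf_eq_left.mpr (hSc _ hyx).le]
    exact ⟨.refl, .single hyx⟩
  | @head y y' hyy' hy'm ih =>
    rcases eq_or_ne x y' with rfl | hne
    · rw [inf_eq_right.mpr (Descends.le hSc hy'm)]
      exact ⟨hy'm, .refl⟩
    · obtain ⟨hx, hy'⟩ := hS.inf_mem hSc hyx hyy' hne
      have hm : x ⊓ y' ⊓ m = x ⊓ m := by rw [inf_assoc, inf_eq_right.mpr (Descends.le hSc hy'm)]
      obtain ⟨h₁, h₂⟩ := ih hy'
      rw [hm] at h₁ h₂
      exact ⟨.head hx h₁, h₂⟩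

theorem Descends.descends_or_exists_above (hS : DiamondClosed S) (hSc : ∀ p ∈ S, p.2 ⋖ p.1)
    (h : Descends S x u) (hum : (u, m) ∈ S) (hvm : (v, m) ∈ S) (huv : u ≠ v) :
    Descends S x v ∨ ∃ w, (w, x) ∈ S ∧ Descends S w v := by
  induction h using Relation.ReflTransGen.head_induction_on with
  | refl =>
    obtain ⟨hu, hv⟩ := hS.sup_mem hSc hum hvm huv
    exact Or.inr ⟨u ⊔ v, hu, .single hv⟩
  | @head x x' hxx' _ ih =>
    rcases ih with hx'v | ⟨w, hwx', hwv⟩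
    · exact Or.inl (.head hxx' hx'v)
    · rcases eq_or_ne x w with rfl | hne
      · exact Or.inl hwv
      · obtain ⟨hx, hw⟩ := hS.sup_mem hSc hxx' hwx' hne
        exact Or.inr ⟨x ⊔ w, hx, .head hw hwv⟩

theorem exists_descends_of_reflTransGen (hS : DiamondClosed S) (hSc : ∀ p ∈ S, p.2 ⋖ p.1)
    (h : Relation.ReflTransGen (fun a b => (a, b) ∈ S ∨ (b, a) ∈ S) x y) :
    ∃ m, Descends S x m ∧ Descends S y m := by
  induction h using Relation.ReflTransGen.head_induction_on with
  | refl => exact ⟨y, .refl, .refl⟩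
  | head hxx' _ ih =>
    obtain ⟨m, hx'm, hym⟩ := ih
    rcases hxx' with hxx' | hx'x
    · exact ⟨m, .head hxx' hx'm, hym⟩
    · obtain ⟨hx, hm⟩ := hx'm.inf_of_mem hS hSc hx'x
      exact ⟨_, hx, hym.trans hm⟩

/-- Each case raises the common lower end `m` strictly, hence the induction on `m` from above. -/
theorem descends_inf_of_descends [Finite α] (hS : DiamondClosed S) (hSc : ∀ p ∈ S, p.2 ⋖ p.1)
    (hxm : Descends S x m) (hym : Descends S y m) :
    Descends S x (x ⊓ y) ∧ Descends S y (x ⊓ y) := by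
  induction m using WellFoundedGT.induction generalizing x y with
  | _ m ih =>
  rcases (le_inf (hxm.le hSc) (hym.le hSc)).eq_or_lt with rfl | hlt
  · exact ⟨hxm, hym⟩
  obtain rfl | ⟨u, hxu, hum⟩ := hxm.cases_tail
  · exact absurd hlt (inf_le_left.not_gt)
  obtain rfl | ⟨v, hyv, hvm⟩ := hym.cases_tail
  · exact absurd hlt (inf_le_right.not_gt)
  have hmv : m < v := (hSc _ hvm).lt
  rcases eq_or_ne u v with rfl | huv
  · exact ih u hmv hxu hyv
  rcases Descends.descends_or_exists_above hS hSc hxu hum hvm huv with hxv | ⟨w, hwx, hwv⟩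
  · exact ih v hmv hxv hyv
  · obtain ⟨hw, hy⟩ := ih v hmv hwv hyv
    obtain ⟨hx, hwy⟩ := hw.inf_of_mem hS hSc hwx
    rw [← inf_assoc, inf_eq_left.mpr (hSc _ hwx).le] at hx hwy
    exact ⟨hx, hy.trans hwy⟩

end Arcs

section Walks
variable {α : Type*} {S : Set (α × α)} {l : List α} {x y z : α}

def arcGraph (S : Set (α × α)) : SimpleGraph α := fromRel fun a b => (a, b) ∈ S

theorem isPathIn_support (W : (arcGraph S).Walk x y) : IsPathIn S x y W.support :=
  ⟨by rw [← W.cons_tail_support]; rfl,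
    by rw [List.getLast?_eq_some_getLast W.support_ne_nil, W.getLast_support],
    W.isChain_adj_support.imp fun _ _ h => h.2⟩

theorem IsPathIn.reflTransGen (h : IsPathIn S x y l) :
    Relation.ReflTransGen (fun a b => (a, b) ∈ S ∨ (b, a) ∈ S) x y := by
  obtain ⟨hx, hy, hl⟩ := h
  obtain ⟨l, rfl⟩ : ∃ l', l = x :: l' := by
    cases l with
    | nil => simp at hx
    | cons a l' => exact ⟨l', by simpa using hx⟩
  exact List.relationReflTransGen_of_exists_isChain_cons l hl
    (by simpa [List.getLast?_eq_some_getLast] using hy)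

variable [Lattice α]

theorem arcGraph_le_coverGraph (hSc : ∀ p ∈ S, p.2 ⋖ p.1) : arcGraph S ≤ coverGraph α := by
  rintro a b ⟨-, hab | hba⟩
  · exact Or.inr (hSc _ hab)
  · exact Or.inl (hSc _ hba)

variable [Finite α] [IsModularLattice α]

theorem Descends.exists_walk (hSc : ∀ p ∈ S, p.2 ⋖ p.1) (h : Descends S x z) :
    ∃ W : (arcGraph S).Walk x z, rank x = rank z + W.length := by
  induction h using Relation.ReflTransGen.head_induction_on with
  | refl => exact ⟨.nil, rfl⟩
  | @head x y hxy _ ih =>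
    obtain ⟨W, hW⟩ := ih
    have hyx : y ⋖ x := hSc _ hxy
    have hadj : (arcGraph S).Adj x y := ⟨hyx.ne', Or.inl hxy⟩
    refine ⟨.cons hadj W, ?_⟩
    rw [Walk.length_cons, hyx.rank_eq]
    omega

theorem rank_add_rank_le_length (W : (coverGraph α).Walk x y) :
    rank x + rank y ≤ 2 * rank (x ⊓ y) + W.length := by
  induction W with
  | nil => simp only [Walk.length_nil, inf_idem]; omega
  | @cons u v w hadj p ih =>
    rw [Walk.length_cons]
    rcases hadj with h | h
    · have := h.rank_eq
      have := h.rank_inf_le w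
      omega
    · have := h.rank_eq
      have := rank_mono (inf_le_inf_right w h.le)
      omega

end Walks

/-- In a finite modular lattice, a connected diamond-closed set `S` of cover arcs
contains, for any two spanned vertices `x`, `y`, a path joining them of length
exactly the cover-graph distance `d(x,y)`. -/
theorem connected_diamondClosed_short_path
    {α : Type*} [Lattice α] [Fintype α] [IsModularLattice α]
    (S : Set (α × α)) (hSc : ∀ p ∈ S, p.2 ⋖ p.1)
    (hS : DiamondClosed S) (hconn : ArcConnected S)
    (x y : α) (hx : ArcVertex S x) (hy : ArcVertex S y) :
    ∃ l : List α, IsPathIn S x y l ∧ l.length = (coverGraph α).dist x y + 1 := by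
  obtain ⟨l, hl⟩ := hconn x y hx hy
  obtain ⟨m, hxm, hym⟩ := exists_descends_of_reflTransGen hS hSc hl.reflTransGen
  obtain ⟨hx', hy'⟩ := descends_inf_of_descends hS hSc hxm hym
  obtain ⟨W₁, hW₁⟩ := hx'.exists_walk hSc
  obtain ⟨W₂, hW₂⟩ := hy'.exists_walk hSc
  let P := W₁.append W₂.reverse
  let W := P.mapLe (arcGraph_le_coverGraph hSc)
  have hub : (coverGraph α).dist x y ≤ P.length := by
    simpa only [W, Walk.length_mapLe] using dist_le W
  obtain ⟨V, hV⟩ := W.reachable.exists_walk_length_eq_dist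
  have hlb := rank_add_rank_le_length V
  have hP : P.length = W₁.length + W₂.length := by
    rw [Walk.length_append, Walk.length_reverse]
  refine ⟨P.support, isPathIn_support P, ?_⟩
  rw [Walk.length_support]
  omega
end

section
/- Let L be a finite modular lattice and A a connected subset of the cover arcs of L. Then the diamond-closure of A equals the set of cover arcs of L induced on the sublattice of L generated by the vertices spanned by A, and this sublattice is cover-preserving. -/
/-- The diamond-closure: the smallest diamond-closed superset. -/
def diamondClosure {α : Type*} [PartialOrder α] (A : Set (α × α)) : Set (α × α) :=
  ⋂₀ {T | A ⊆ T ∧ DiamondClosed T}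

def inducedArcs {α : Type*} [PartialOrder α] (K : Set α) : Set (α × α) :=
  {p | p.2 ⋖ p.1 ∧ p.1 ∈ K ∧ p.2 ∈ K}

/-- A subset `K` (with its induced order) is cover-preserving if covers in `K`
are covers in the ambient lattice. -/
def CoverPresSet {α : Type*} [Lattice α] (K : Set α) : Prop :=
  ∀ a b : K, a ⋖ b → (a : α) ⋖ (b : α)

open Relation OrderDual

section Paths

variable {α : Type*} {S : Set (α × α)}

/-- Ascending paths along `S`: the arc `(u, v)` leads from `v` up to `u`. -/
def UpReach (S : Set (α × α)) : α → α → Prop :=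
  ReflTransGen fun v u => (u, v) ∈ S

def Reach (S : Set (α × α)) : α → α → Prop :=
  ReflTransGen fun u v => (u, v) ∈ S ∨ (v, u) ∈ S

def CoverArcs [LT α] (S : Set (α × α)) : Prop :=
  ∀ ⦃u v⦄, (u, v) ∈ S → v ⋖ u

theorem Reach.symm {x y : α} (h : Reach S x y) : Reach S y x :=
  reflTransGen_swap.1 (ReflTransGen.mono (fun _ _ => Or.symm) _ _ h)

theorem Reach.mono {T : Set (α × α)} (hST : S ⊆ T) {x y : α} (h : Reach S x y) :
    Reach T x y :=
  ReflTransGen.mono (fun _ _ => Or.imp (@hST _) (@hST _)) _ _ h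

theorem IsPathIn.reach {x y : α} {l : List α} (h : IsPathIn S x y l) : Reach S x y := by
  obtain ⟨hx, hy, hl⟩ := h
  obtain ⟨t, rfl⟩ := List.head?_eq_some_iff.1 hx
  refine List.relationReflTransGen_of_exists_isChain_cons t hl ?_
  rw [List.getLast?_eq_some_getLast (List.cons_ne_nil _ _)] at hy
  exact Option.some_injective _ hy

def dualArcs (S : Set (α × α)) : Set (αᵒᵈ × αᵒᵈ) :=
  {p | (ofDual p.2, ofDual p.1) ∈ S}

theorem upReach_dualArcs {a b : α} :
    UpReach (dualArcs S) (toDual a) (toDual b) ↔ UpReach S b a :=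
  reflTransGen_swap

theorem UpReach.arcVertex_right {a b : α} (h : UpReach S a b) (ha : ArcVertex S a) :
    ArcVertex S b := by
  rcases h.cases_tail with rfl | ⟨c, -, hbc⟩
  exacts [ha, ⟨(b, c), hbc, Or.inl rfl⟩]

theorem UpReach.arcVertex_left {a b : α} (h : UpReach S a b) (hb : ArcVertex S b) :
    ArcVertex S a := by
  rcases h.cases_head with rfl | ⟨c, hca, -⟩
  exacts [hb, ⟨(c, a), hca, Or.inr rfl⟩]

end Paths

section PartialOrder

variable {α : Type*} [PartialOrder α] {A S : Set (α × α)}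

theorem subset_diamondClosure : A ⊆ diamondClosure A :=
  Set.subset_sInter fun _ hT => hT.1

theorem diamondClosure_subset (hAS : A ⊆ S) (hS : DiamondClosed S) : diamondClosure A ⊆ S :=
  Set.sInter_subset_of_mem ⟨hAS, hS⟩

theorem diamondClosed_diamondClosure : DiamondClosed (diamondClosure A) := by
  intro a b c d hd h
  have hT : ∀ T ∈ {T | A ⊆ T ∧ DiamondClosed T},
      (a, b) ∈ T ∧ (a, c) ∈ T ∧ (b, d) ∈ T ∧ (c, d) ∈ T := fun T hT =>
    hT.2 a b c d hd (h.imp (fun h => ⟨h.1 T hT, h.2 T hT⟩) fun h => ⟨h.1 T hT, h.2 T hT⟩)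
  exact ⟨fun T h => (hT T h).1, fun T h => (hT T h).2.1, fun T h => (hT T h).2.2.1,
    fun T h => (hT T h).2.2.2⟩

theorem diamondClosed_covBy : DiamondClosed {p : α × α | p.2 ⋖ p.1} :=
  fun _ _ _ _ ⟨_, hba, hca, hdb, hdc⟩ _ => ⟨hba, hca, hdb, hdc⟩

theorem coverArcs_diamondClosure (hA : ∀ p ∈ A, p.2 ⋖ p.1) : CoverArcs (diamondClosure A) :=
  fun _ _ h => diamondClosure_subset hA diamondClosed_covBy h

theorem IsDiamond.ofDual {a b c d : αᵒᵈ} (h : IsDiamond a b c d) :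
    IsDiamond (ofDual d) (ofDual b) (ofDual c) (ofDual a) :=
  ⟨h.1, ofDual_covBy_ofDual_iff.2 h.2.2.2.1, ofDual_covBy_ofDual_iff.2 h.2.2.2.2,
    ofDual_covBy_ofDual_iff.2 h.2.1, ofDual_covBy_ofDual_iff.2 h.2.2.1⟩

theorem DiamondClosed.dualArcs (hS : DiamondClosed S) : DiamondClosed (dualArcs S) := by
  intro a b c d hd h
  obtain ⟨hdb, hdc, hba, hca⟩ := hS _ _ _ _ hd.ofDual h.symm
  exact ⟨hba, hca, hdb, hdc⟩

theorem UpReach.le (hcov : CoverArcs S) {a b : α} (h : UpReach S a b) : a ≤ b := by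
  induction h with
  | refl => exact le_rfl
  | tail _ hcb ih => exact ih.trans (hcov hcb).le

theorem UpReach.mem_of_covBy (hcov : CoverArcs S) {a b : α} (h : UpReach S a b)
    (hab : a ⋖ b) : (b, a) ∈ S := by
  rcases h.cases_tail with rfl | ⟨c, hac, hbc⟩
  · exact absurd hab.lt (lt_irrefl _)
  · obtain rfl : a = c := (UpReach.le hcov hac).eq_of_not_lt fun h => hab.2 h (hcov hbc).lt
    exact hbc

theorem inducedArcs_subset_of_upReach {K : Set α} (hcov : CoverArcs S)
    (hup : ∀ a ∈ K, ∀ b ∈ K, a ≤ b → UpReach S a b) : inducedArcs K ⊆ S :=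
  fun _ ⟨hp, h1, h2⟩ => (hup _ h2 _ h1 hp.le).mem_of_covBy hcov hp

theorem exists_reach_of_mem_diamondClosure {p : α × α} (hp : p ∈ diamondClosure A) :
    ∃ v, ArcVertex A v ∧ Reach (diamondClosure A) p.1 v := by
  set D := diamondClosure A
  set C := {x | ∃ v, ArcVertex A v ∧ Reach D x v}
  have hdown : ∀ {u v}, (u, v) ∈ D → u ∈ C → v ∈ C := fun huv ⟨w, hw, hu⟩ =>
    ⟨w, hw, .head (.inr huv) hu⟩
  have hup : ∀ {u v}, (u, v) ∈ D → v ∈ C → u ∈ C := fun huv ⟨w, hw, hv⟩ =>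
    ⟨w, hw, .head (.inl huv) hv⟩
  suffices hDT : D ⊆ {p | p ∈ D ∧ p.1 ∈ C} from (hDT hp).2
  refine diamondClosure_subset (fun p hp => ⟨subset_diamondClosure hp, p.1, ⟨p, hp, .inl rfl⟩,
    .refl⟩) fun a b c d hd h => ?_
  obtain ⟨hab, hac, hbd, hcd⟩ := diamondClosed_diamondClosure a b c d hd
    (h.imp (fun h => ⟨h.1.1, h.2.1⟩) fun h => ⟨h.1.1, h.2.1⟩)
  obtain ⟨ha, hb, hc⟩ : a ∈ C ∧ b ∈ C ∧ c ∈ C := by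
    rcases h with ⟨⟨-, ha⟩, -⟩ | ⟨⟨-, hb⟩, -, hc⟩
    · exact ⟨ha, hdown hab ha, hdown hac ha⟩
    · exact ⟨hup hab hb, hb, hc⟩
  exact ⟨⟨hab, ha⟩, ⟨hac, ha⟩, ⟨hbd, hb⟩, ⟨hcd, hc⟩⟩

theorem ArcConnected.reach_diamondClosure (hconn : ArcConnected A) {x y : α}
    (hx : ArcVertex (diamondClosure A) x) (hy : ArcVertex (diamondClosure A) y) :
    Reach (diamondClosure A) x y := by
  have hbase : ∀ {x}, ArcVertex (diamondClosure A) x →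
      ∃ v, ArcVertex A v ∧ Reach (diamondClosure A) x v := by
    rintro x ⟨p, hp, rfl | rfl⟩
    · exact exists_reach_of_mem_diamondClosure hp
    · obtain ⟨v, hv, hpv⟩ := exists_reach_of_mem_diamondClosure hp
      exact ⟨v, hv, .head (.inr hp) hpv⟩
  obtain ⟨v, hv, hxv⟩ := hbase hx
  obtain ⟨w, hw, hyw⟩ := hbase hy
  obtain ⟨l, hl⟩ := hconn v w hv hw
  exact hxv.trans <| (hl.reach.mono subset_diamondClosure).trans hyw.symm

end PartialOrder

section Lattice

variable {α : Type*} [Lattice α] {A S : Set (α × α)}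

theorem IsDiamond.eq_sup {a b c d : α} (h : IsDiamond a b c d) : a = b ⊔ c :=
  (h.2.1.wcovBy.sup_eq h.2.2.1.wcovBy h.1).symm

theorem IsDiamond.eq_inf {a b c d : α} (h : IsDiamond a b c d) : d = b ⊓ c :=
  (h.2.2.2.1.wcovBy.inf_eq h.2.2.2.2.wcovBy h.1).symm

theorem diamondClosed_inducedArcs {K : Set α} (hK : IsSublattice K) :
    DiamondClosed (inducedArcs K) := by
  intro a b c d hd h
  obtain ⟨hb, hc⟩ : b ∈ K ∧ c ∈ K :=
    h.elim (fun h => ⟨h.1.2.2, h.2.2.2⟩) fun h => ⟨h.1.2.1, h.2.2.1⟩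
  have ha : a ∈ K := hd.eq_sup ▸ hK.supClosed hb hc
  have hd' : d ∈ K := hd.eq_inf ▸ hK.infClosed hb hc
  exact ⟨⟨hd.2.1, ha, hb⟩, ⟨hd.2.2.1, ha, hc⟩, ⟨hd.2.2.2.1, hb, hd'⟩,
    ⟨hd.2.2.2.2, hc, hd'⟩⟩

theorem diamondClosure_subset_inducedArcs (hA : ∀ p ∈ A, p.2 ⋖ p.1) :
    diamondClosure A ⊆ inducedArcs (latticeClosure {v | ArcVertex A v}) :=
  diamondClosure_subset
    (fun p hp => ⟨hA p hp, subset_latticeClosure ⟨p, hp, .inl rfl⟩,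
      subset_latticeClosure ⟨p, hp, .inr rfl⟩⟩)
    (diamondClosed_inducedArcs isSublattice_latticeClosure)

theorem coverPresSet_of_upReach {K : Set α} (hSK : S ⊆ inducedArcs K)
    (hup : ∀ a ∈ K, ∀ b ∈ K, a ≤ b → UpReach S a b) : CoverPresSet K := by
  have hcov : CoverArcs S := fun _ _ h => (hSK h).1
  intro a b hab
  rcases (hup a a.2 b b.2 hab.le).cases_tail with hba | ⟨c, hac, hbc⟩
  · exact absurd (Subtype.ext hba ▸ hab.lt) (lt_irrefl a)
  · obtain ⟨hcb, -, hcK⟩ := hSK hbc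
    obtain rfl : (a : α) = c := (UpReach.le hcov hac).eq_of_not_lt fun h =>
      hab.2 (c := ⟨c, hcK⟩) h hcb.lt
    exact hcb

end Lattice

section Modular

variable {α : Type*} [Lattice α] [IsModularLattice α] {S : Set (α × α)}

theorem isDiamond_sup_s11 {c x y : α} (hx : c ⋖ x) (hy : c ⋖ y) (hxy : x ≠ y) :
    IsDiamond (x ⊔ y) x y c := by
  have hinf : x ⊓ y = c := hx.wcovBy.inf_eq hy.wcovBy hxy
  exact ⟨hxy, covBy_sup_of_inf_covBy_right (hinf ▸ hy),
    covBy_sup_of_inf_covBy_left (hinf ▸ hx), hx, hy⟩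

theorem UpReach.sup_of_mem (hS : DiamondClosed S) (hcov : CoverArcs S) {a b c : α}
    (hba : (b, a) ∈ S) (h : UpReach S a c) :
    UpReach S b (b ⊔ c) ∧ (b ⊔ c = c ∨ (b ⊔ c, c) ∈ S) := by
  induction h with
  | refl =>
    rw [sup_eq_left.2 (hcov hba).le]
    exact ⟨.refl, .inr hba⟩
  | @tail c c' _ hcc' ih =>
    obtain ⟨hup, hc | hbc⟩ := ih
    · rw [sup_eq_right.2 ((sup_eq_right.1 hc).trans (hcov hcc').le)]
      exact ⟨hc ▸ hup |>.tail hcc', .inl rfl⟩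
    by_cases hne : b ⊔ c = c'
    · rw [← hne, sup_left_idem]
      exact ⟨hup, .inl rfl⟩
    · have hd := isDiamond_sup_s11 (hcov hbc) (hcov hcc') hne
      obtain ⟨h1, h2, -, -⟩ := hS _ _ _ _ hd (.inr ⟨hbc, hcc'⟩)
      rw [sup_assoc, sup_eq_right.2 (hcov hcc').le] at h1 h2
      exact ⟨hup.tail h1, .inr h2⟩

theorem UpReach.sup_of_upReach (hS : DiamondClosed S) (hcov : CoverArcs S)
    {w x y : α} (hx : UpReach S w x) (hy : UpReach S w y) :
    UpReach S x (x ⊔ y) ∧ UpReach S y (x ⊔ y) := by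
  induction hx with
  | refl =>
    rw [sup_eq_right.2 (hy.le hcov)]
    exact ⟨hy, .refl⟩
  | @tail x' x _ hxx' ih =>
    obtain ⟨hup, htop⟩ := ih.1.sup_of_mem hS hcov hxx'
    rw [← sup_assoc, sup_eq_left.2 (hcov hxx').le] at hup htop
    refine ⟨hup, ?_⟩
    rcases htop with htop | htop
    exacts [htop ▸ ih.2, ih.2.tail htop]

theorem UpReach.inf_of_upReach (hS : DiamondClosed S) (hcov : CoverArcs S)
    {w x y : α} (hx : UpReach S x w) (hy : UpReach S y w) :
    UpReach S (x ⊓ y) x ∧ UpReach S (x ⊓ y) y := by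
  have hcov' : CoverArcs (dualArcs S) := fun _ _ h =>
    ofDual_covBy_ofDual_iff.1 (hcov h)
  obtain ⟨h1, h2⟩ := UpReach.sup_of_upReach hS.dualArcs hcov'
    (upReach_dualArcs.2 hx) (upReach_dualArcs.2 hy)
  exact ⟨upReach_dualArcs.1 h1, upReach_dualArcs.1 h2⟩

theorem Reach.exists_common_source (hS : DiamondClosed S) (hcov : CoverArcs S)
    {x y : α} (h : Reach S x y) : ∃ w, UpReach S w x ∧ UpReach S w y := by
  induction h with
  | refl => exact ⟨x, .refl, .refl⟩
  | @tail z y _ hzy ih =>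
    obtain ⟨w, hwx, hwz⟩ := ih
    rcases hzy with hzy | hyz
    · obtain ⟨h1, h2⟩ := UpReach.inf_of_upReach hS hcov (.single hzy) hwz
      exact ⟨y ⊓ w, h2.trans hwx, h1⟩
    · exact ⟨w, hwx, hwz.tail hyz⟩

theorem Reach.exists_common_target (hS : DiamondClosed S) (hcov : CoverArcs S)
    {x y : α} (h : Reach S x y) : ∃ w, UpReach S x w ∧ UpReach S y w := by
  induction h with
  | refl => exact ⟨x, .refl, .refl⟩
  | @tail z y _ hzy ih =>
    obtain ⟨w, hxw, hzw⟩ := ih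
    rcases hzy with hzy | hyz
    · exact ⟨w, hxw, .head hzy hzw⟩
    · obtain ⟨h1, h2⟩ := UpReach.sup_of_upReach hS hcov (.single hyz) hzw
      exact ⟨y ⊔ w, hxw.trans h2, h1⟩

theorem Reach.upReach_sup (hS : DiamondClosed S) (hcov : CoverArcs S) {x y : α}
    (h : Reach S x y) : UpReach S x (x ⊔ y) :=
  have ⟨_, hx, hy⟩ := h.exists_common_source hS hcov
  (UpReach.sup_of_upReach hS hcov hx hy).1

theorem Reach.upReach_inf (hS : DiamondClosed S) (hcov : CoverArcs S) {x y : α}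
    (h : Reach S x y) : UpReach S (x ⊓ y) x :=
  have ⟨_, hx, hy⟩ := h.exists_common_target hS hcov
  (UpReach.inf_of_upReach hS hcov hx hy).1

end Modular

section Generated

variable {α : Type*} [Lattice α] [IsModularLattice α] {A : Set (α × α)}

theorem isSublattice_arcVertex_diamondClosure (hA : ∀ p ∈ A, p.2 ⋖ p.1)
    (hconn : ArcConnected A) : IsSublattice {x | ArcVertex (diamondClosure A) x} where
  supClosed _ hx _ hy := ((hconn.reach_diamondClosure hx hy).upReach_sup
    diamondClosed_diamondClosure (coverArcs_diamondClosure hA)).arcVertex_right hx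
  infClosed _ hx _ hy := ((hconn.reach_diamondClosure hx hy).upReach_inf
    diamondClosed_diamondClosure (coverArcs_diamondClosure hA)).arcVertex_left hx

theorem upReach_of_mem_latticeClosure (hA : ∀ p ∈ A, p.2 ⋖ p.1) (hconn : ArcConnected A) :
    ∀ a ∈ latticeClosure {v | ArcVertex A v}, ∀ b ∈ latticeClosure {v | ArcVertex A v},
      a ≤ b → UpReach (diamondClosure A) a b := by
  have hK : latticeClosure {v | ArcVertex A v} ⊆ {x | ArcVertex (diamondClosure A) x} :=
    latticeClosure_min (fun _ ⟨p, hp, hv⟩ => ⟨p, subset_diamondClosure hp, hv⟩)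
      (isSublattice_arcVertex_diamondClosure hA hconn)
  intro a ha b hb hab
  simpa only [sup_eq_right.2 hab] using (hconn.reach_diamondClosure (hK ha) (hK hb)).upReach_sup
    diamondClosed_diamondClosure (coverArcs_diamondClosure hA)

end Generated

theorem diamondClosure_of_connected_general
    {α : Type*} [Lattice α] [IsModularLattice α]
    (A : Set (α × α)) (hA : ∀ p ∈ A, p.2 ⋖ p.1) (hconn : ArcConnected A) :
    diamondClosure A = inducedArcs (latticeClosure {v | ArcVertex A v}) ∧
      CoverPresSet (latticeClosure {v | ArcVertex A v} : Set α) := by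
  have hDK := diamondClosure_subset_inducedArcs hA
  have hup := upReach_of_mem_latticeClosure hA hconn
  exact ⟨hDK.antisymm (inducedArcs_subset_of_upReach (coverArcs_diamondClosure hA) hup),
    coverPresSet_of_upReach hDK hup⟩

/-- In a finite modular lattice, for a connected set `A` of cover arcs, the
diamond-closure of `A` equals the set of cover arcs induced on the sublattice
generated by the vertices spanned by `A`, and this sublattice is cover-preserving. -/
theorem diamondClosure_of_connected
    {α : Type*} [Lattice α] [Fintype α] [IsModularLattice α]
    (A : Set (α × α)) (hA : ∀ p ∈ A, p.2 ⋖ p.1) (hconn : ArcConnected A) :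
    diamondClosure A = inducedArcs (latticeClosure {v | ArcVertex A v}) ∧
      CoverPresSet (latticeClosure {v | ArcVertex A v} : Set α) :=
  diamondClosure_of_connected_general A hA hconn
end

section
/- Let R be a division ring and suppose elements a, b, c, d of R and monic polynomials q, r, s, u in R[t] satisfy u = (t−c)(t−a)q = (t−d)(t−b)q with a ≠ b. Then c = (a−b)b(a−b)^{-1} and d = (b−a)a(b−a)^{-1}. -/
open Polynomial

/-
Comparing the coefficients of `(t - c)(t - a) = (t - d)(t - b)` gives `c + a = d + b` and
`c a = d b`. Hence `c (a - b) = d b - c b = (d - c) b = (a - b) b`, and symmetrically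
`d (b - a) = (b - a) a`; since `a ≠ b`, both can be solved for `c` and `d`.
-/

theorem X_sub_C_mul_X_sub_C {R : Type*} [Ring R] (x y : R) :
    (X - C x) * (X - C y) = X ^ 2 - C (x + y) * X + C (x * y) := by
  rw [sub_mul, mul_sub, mul_sub, C_add, add_mul, C_mul, X_mul_C]
  noncomm_ring

theorem add_eq_and_mul_eq_of_X_sub_C_mul_X_sub_C_eq {R : Type*} [Ring R] {a b c d : R}
    (h : (X - C c) * (X - C a) = (X - C d) * (X - C b)) :
    c + a = d + b ∧ c * a = d * b := by
  rw [X_sub_C_mul_X_sub_C, X_sub_C_mul_X_sub_C] at h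
  have h1 := congrArg (coeff · 1) h
  have h0 := congrArg (coeff · 0) h
  simp only [coeff_add, coeff_sub, coeff_X_pow, coeff_C_mul_X, coeff_C] at h1 h0
  exact ⟨by simpa [← neg_add_rev] using h1, by simpa using h0⟩

theorem eq_conj_of_add_eq_of_mul_eq {R : Type*} [DivisionRing R] {a b c d : R}
    (hadd : c + a = d + b) (hmul : c * a = d * b) (hab : a ≠ b) :
    c = (a - b) * b * (a - b)⁻¹ := by
  have hdc : d - c = a - b := by rw [sub_eq_sub_iff_add_eq_add, ← hadd, add_comm]
  have hc : c * (a - b) = (a - b) * b := by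
    rw [mul_sub, hmul, ← sub_mul, hdc]
  rw [eq_comm, mul_inv_eq_iff_eq_mul₀ (sub_ne_zero.mpr hab), hc]

/-- Over a division ring, if a polynomial factors both as `(t−c)(t−a)q` and
`(t−d)(t−b)q` with `q` monic and `a ≠ b`, then `c = (a−b)b(a−b)⁻¹` and
`d = (b−a)a(b−a)⁻¹`. -/
theorem pseudo_roots_conjugation {R : Type*} [DivisionRing R]
    (a b c d : R) (q u : R[X]) (hq : q.Monic)
    (h1 : u = (X - C c) * (X - C a) * q)
    (h2 : u = (X - C d) * (X - C b) * q)
    (hab : a ≠ b) :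
    c = (a - b) * b * (a - b)⁻¹ ∧ d = (b - a) * a * (b - a)⁻¹ := by
  have h : (X - C c) * (X - C a) = (X - C d) * (X - C b) :=
    mul_right_cancel₀ hq.ne_zero (h1 ▸ h2)
  obtain ⟨hadd, hmul⟩ := add_eq_and_mul_eq_of_X_sub_C_mul_X_sub_C_eq h
  exact ⟨eq_conj_of_add_eq_of_mul_eq hadd hmul hab,
    eq_conj_of_add_eq_of_mul_eq hadd.symm hmul.symm hab.symm⟩
end

section
/- Let (P,≤) be a finite pointed poset and L = D(P,≤). The map sending an extension (P,≤*) of (P,≤) to the sublattice D(P,≤*) of L is a bijection between pointed quasi-order extensions of ≤ and sublattices of L; its inverse sends a sublattice M to the quasi-order ≤^M defined by i ≤^M j iff every member of M containing j also contains i. -/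
/-- Downsets of a quasi-order `r`: subsets closed downwards under `r`,
containing `⊥` and excluding `⊤`. -/
def QDownsets {P : Type*} [PartialOrder P] [BoundedOrder P]
    (r : P → P → Prop) : Set (Set P) :=
  {D | (∀ i j : P, r i j → j ∈ D → i ∈ D) ∧ ⊥ ∈ D ∧ ⊤ ∉ D}

/-- A pointed quasi-order extension of the order of a pointed poset `P`. -/
def IsExtension {P : Type*} [PartialOrder P] [BoundedOrder P]
    (r : P → P → Prop) : Prop :=
  Reflexive r ∧ Transitive r ∧ (∀ i j : P, i ≤ j → r i j) ∧ ¬ r ⊤ ⊥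

/-- A sublattice of the lattice `L = D(P,≤)` of downsets of `P`: a nonempty
subcollection of downsets closed under union and intersection. -/
def IsSubl {P : Type*} [PartialOrder P] [BoundedOrder P]
    (M : Set (Set P)) : Prop :=
  M ⊆ QDownsets (· ≤ · : P → P → Prop) ∧ M.Nonempty ∧
    ∀ D ∈ M, ∀ E ∈ M, D ∪ E ∈ M ∧ D ∩ E ∈ M

/-- The quasi-order `≤^M` induced by a collection `M` of downsets:
`i ≤^M j` iff every member of `M` containing `j` also contains `i`. -/
def relOf {P : Type*} (M : Set (Set P)) (i j : P) : Prop :=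
  ∀ D ∈ M, j ∈ D → i ∈ D

lemma sInter_mem_of_closed {P : Type*} {M : Set (Set P)}
    (hM : ∀ D ∈ M, ∀ E ∈ M, D ∩ E ∈ M) (S : Set (Set P)) (hfin : S.Finite) :
    S.Nonempty → S ⊆ M → ⋂₀ S ∈ M := by
  refine Set.Finite.induction_on S hfin (fun h _ => absurd h (by simp)) ?_
  intro a s ha hsfin ih _ hsub
  rcases s.eq_empty_or_nonempty with rfl | hne
  · simpa using hsub (Set.mem_insert a _)
  · rw [Set.sInter_insert]
    exact hM _ (hsub (Set.mem_insert a _)) _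
      (ih hne (fun x hx => hsub (Set.mem_insert_of_mem _ hx)))

lemma sUnion_mem_of_closed {P : Type*} {M : Set (Set P)}
    (hM : ∀ D ∈ M, ∀ E ∈ M, D ∪ E ∈ M) (S : Set (Set P)) (hfin : S.Finite) :
    S.Nonempty → S ⊆ M → ⋃₀ S ∈ M := by
  refine Set.Finite.induction_on S hfin (fun h _ => absurd h (by simp)) ?_
  intro a s ha hsfin ih _ hsub
  rcases s.eq_empty_or_nonempty with rfl | hne
  · simpa using hsub (Set.mem_insert a _)
  · rw [Set.sUnion_insert]
    exact hM _ (hsub (Set.mem_insert a _)) _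
      (ih hne (fun x hx => hsub (Set.mem_insert_of_mem _ hx)))

/-- Birkhoff-type correspondence: the map `(P,≤*) ↦ D(P,≤*)` is a bijection from
pointed quasi-order extensions of `≤` to sublattices of `L = D(P,≤)`, with
inverse sending a sublattice `M` to the quasi-order `≤^M`. -/
theorem extension_sublattice_bijection
    {P : Type*} [PartialOrder P] [BoundedOrder P] [Fintype P]
    (hP : (⊥ : P) ≠ ⊤) :
    (∀ r : P → P → Prop, IsExtension r → IsSubl (QDownsets r)) ∧
    (∀ M : Set (Set P), IsSubl M →
      IsExtension (relOf M) ∧ QDownsets (relOf M) = M) ∧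
    (∀ r : P → P → Prop, IsExtension r → relOf (QDownsets r) = r) := by
  refine ⟨?_, ?_, ?_⟩
  · -- extension ↦ sublattice
    rintro r ⟨hrefl, htrans, hext, hnb⟩
    refine ⟨?_, ⟨{x | r x ⊥}, ?_⟩, ?_⟩
    · rintro D ⟨hdc, hb, ht⟩
      exact ⟨fun i j hij hj => hdc i j (hext i j hij) hj, hb, ht⟩
    · exact ⟨fun i j hij hj => htrans hij hj, hrefl ⊥, hnb⟩
    · rintro D ⟨hD, hDb, hDt⟩ E ⟨hE, hEb, hEt⟩
      constructor
      · exact ⟨fun i j hij hj => hj.elim (fun h => Or.inl (hD i j hij h))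
          (fun h => Or.inr (hE i j hij h)), Or.inl hDb,
          fun h => h.elim hDt hEt⟩
      · exact ⟨fun i j hij hj => ⟨hD i j hij hj.1, hE i j hij hj.2⟩,
          ⟨hDb, hEb⟩, fun h => hDt h.1⟩
  · rintro M ⟨hsub, ⟨D0, hD0⟩, hcl⟩
    have hext : IsExtension (relOf M) := by
      refine ⟨fun x D _ h => h, fun a b c hab hbc D hD hc => hab D hD (hbc D hD hc),
        fun i j hij D hD hj => (hsub hD).1 i j hij hj, fun h => ?_⟩
      exact (hsub hD0).2.2 (h D0 hD0 (hsub hD0).2.1)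
    refine ⟨hext, Set.Subset.antisymm ?_ ?_⟩
    · -- hard direction
      rintro D ⟨hdc, hDb, hDt⟩
      -- every j ∈ D is in some member of M
      have key : ∀ j ∈ D, ∃ E ∈ M, j ∈ E := by
        intro j hj
        by_contra h
        push_neg at h
        exact hDt (hdc ⊤ j (fun E hE hjE => absurd hjE (h E hE)) hj)
      set f : P → Set P := fun j => ⋂₀ {E ∈ M | j ∈ E} with hf
      have hfM : ∀ j ∈ D, f j ∈ M := by
        intro j hj
        obtain ⟨E, hE, hjE⟩ := key j hj
        exact sInter_mem_of_closed (fun A hA B hB => (hcl A hA B hB).2) _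
          (Set.toFinite _) ⟨E, hE, hjE⟩ (fun A hA => hA.1)
      have hDeq : D = ⋃₀ (f '' D) := by
        apply Set.Subset.antisymm
        · intro j hj
          exact ⟨f j, ⟨j, hj, rfl⟩, fun E hE => hE.2⟩
        · rintro x ⟨_, ⟨j, hj, rfl⟩, hx⟩
          exact hdc x j (fun E hE hjE => hx E ⟨hE, hjE⟩) hj
      rw [hDeq]
      exact sUnion_mem_of_closed (fun A hA B hB => (hcl A hA B hB).1) _
        (Set.toFinite _) ⟨f ⊥, ⟨⊥, hDb, rfl⟩⟩
        (by rintro _ ⟨j, hj, rfl⟩; exact hfM j hj)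
    · intro E hE
      exact ⟨fun i j hij hj => hij E hE hj, (hsub hE).2.1, (hsub hE).2.2⟩
  · rintro r ⟨hrefl, htrans, hext, hnb⟩
    funext i j
    apply propext
    constructor
    · intro h
      by_contra hrij
      have hD : {x | ¬ r i x} ∈ QDownsets r := by
        refine ⟨fun a b hab hb hia => hb (htrans hia hab), ?_, ?_⟩
        · intro hib
          exact hrij (htrans hib (hext ⊥ j bot_le))
        · simp only [Set.mem_setOf_eq, not_not]
          exact hext i ⊤ le_top
      exact (h _ hD hrij) (hrefl i)
    · intro hij D hD hj
      exact hD.1 i j hij hj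
end

section
/- Let (P,≤) be a finite pointed poset, L = D(P,≤), and let ≤¹, ≤² be two pointed quasi-order extensions of ≤. The sublattices D(P,≤¹) and D(P,≤²) have nonempty intersection if and only if in the transitive closure of the union of ≤¹ and ≤², the elements 0̂ and 1̂ are in distinct equivalence classes. -/
/-!
Every common downset `D` is closed under both relations, hence under the transitive closure `⪯`
of their union; as `0̂ ∈ D` and `1̂ ∉ D`, this rules out `1̂ ⪯ 0̂`. Conversely, since `0̂ ⪯ 1̂`
always holds, distinct classes just means `¬ 1̂ ⪯ 0̂`, and then the `⪯`-downset of `0̂` is a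
common downset.
-/

theorem Relation.TransGen.mem_of_forall_rel_mem {α : Type*} {r : α → α → Prop} {D : Set α}
    (hD : ∀ i j, r i j → j ∈ D → i ∈ D) {i j : α} (h : TransGen r i j) (hj : j ∈ D) :
    i ∈ D := by
  induction h with
  | single hij => exact hD _ _ hij hj
  | tail _ hbc ih => exact ih (hD _ _ hbc hj)

section

variable {P : Type*} [PartialOrder P] [BoundedOrder P]

theorem not_transGen_top_bot_of_mem_inter {r₁ r₂ : P → P → Prop} {D : Set P}
    (hD : D ∈ QDownsets r₁ ∩ QDownsets r₂) :
    ¬ Relation.TransGen (fun i j => r₁ i j ∨ r₂ i j) (⊤ : P) ⊥ := by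
  obtain ⟨⟨hD₁, hbot, htop⟩, hD₂, -⟩ := hD
  refine fun h => htop (h.mem_of_forall_rel_mem ?_ hbot)
  rintro i j (hij | hij)
  exacts [hD₁ i j hij, hD₂ i j hij]

theorem setOf_reflTransGen_bot_mem_qDownsets {r R : P → P → Prop} (hrR : ∀ i j, r i j → R i j)
    (hP : (⊥ : P) ≠ ⊤) (htop : ¬ Relation.TransGen R (⊤ : P) ⊥) :
    {i | Relation.ReflTransGen R i ⊥} ∈ QDownsets r := by
  refine ⟨fun i j hij hj => .head (hrR i j hij) hj, .refl, fun h => ?_⟩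
  rcases Relation.reflTransGen_iff_eq_or_transGen.mp h with h | h
  exacts [hP h, htop h]

end

theorem inter_nonempty_iff_compatible_general
    {P : Type*} [PartialOrder P] [BoundedOrder P]
    (hP : (⊥ : P) ≠ ⊤)
    (r₁ r₂ : P → P → Prop) (h₁ : IsExtension r₁) :
    (QDownsets r₁ ∩ QDownsets r₂).Nonempty ↔
      ¬ (Relation.TransGen (fun i j => r₁ i j ∨ r₂ i j) (⊥ : P) ⊤ ∧
         Relation.TransGen (fun i j => r₁ i j ∨ r₂ i j) (⊤ : P) ⊥) := by
  constructor
  · rintro ⟨D, hD⟩ ⟨-, htop⟩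
    exact not_transGen_top_bot_of_mem_inter hD htop
  · intro hcon
    have hbot : Relation.TransGen (fun i j => r₁ i j ∨ r₂ i j) (⊥ : P) ⊤ :=
      .single (.inl (h₁.2.2.1 ⊥ ⊤ le_top))
    have htop := fun h => hcon ⟨hbot, h⟩
    exact ⟨_, setOf_reflTransGen_bot_mem_qDownsets (fun _ _ => .inl) hP htop,
      setOf_reflTransGen_bot_mem_qDownsets (fun _ _ => .inr) hP htop⟩

/-- For two pointed quasi-order extensions `≤¹`, `≤²` of a finite pointed poset,
`D(P,≤¹) ∩ D(P,≤²)` is nonempty iff `0̂` and `1̂` lie in distinct equivalence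
classes of the transitive closure of `≤¹ ∪ ≤²`. -/
theorem inter_nonempty_iff_compatible
    {P : Type*} [PartialOrder P] [BoundedOrder P] [Fintype P]
    (hP : (⊥ : P) ≠ ⊤)
    (r₁ r₂ : P → P → Prop) (h₁ : IsExtension r₁) (h₂ : IsExtension r₂) :
    (QDownsets r₁ ∩ QDownsets r₂).Nonempty ↔
      ¬ (Relation.TransGen (fun i j => r₁ i j ∨ r₂ i j) (⊥ : P) ⊤ ∧
         Relation.TransGen (fun i j => r₁ i j ∨ r₂ i j) (⊤ : P) ⊥) :=
  inter_nonempty_iff_compatible_general hP r₁ r₂ h₁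
end
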